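/- arXiv:1710.08982 — 8 statements merged into one kernel-verified Lean document; each statement's English description precedes it below -/
import Mathlib

section
/- Let G be a loopless multigraph on a finite vertex set V, let t ≥ 0 be an integer, and let H be the t-core of G. If μ_H(u,v) ≤ t+1 for all u,v ∈ V, and the simple graph on V in which u and v are adjacent exactly when μ_H(u,v) = t+1 is acyclic, then χ'(G) ≤ Δ(G) + t. -/
structure Multigraph (V : Type*) where
  mu : V → V → ℕ
  symm : ∀ u v, mu u v = mu v u
  loopless : ∀ v, mu v v = 0

namespace Multigraph

variable {V : Type*} [Fintype V]

/-- The degree of a vertex: number of incident edges. -/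
def deg (G : Multigraph V) (v : V) : ℕ := ∑ u, G.mu v u

/-- The maximum degree Δ(G). -/
def maxDeg (G : Multigraph V) : ℕ := Finset.univ.sup (deg G)

/-- The local multiplicity μ_G(v). -/
def locMult (G : Multigraph V) (v : V) : ℕ := Finset.univ.sup (G.mu v)

end Multigraph

namespace Multigraph

variable {V : Type*} [Fintype V]

/-- A proper k-edge-colouring: a decomposition of μ_G into k symmetric {0,1}-valued
matchings. -/
def IsEdgeColoring (G : Multigraph V) (k : ℕ) (M : Fin k → V → V → ℕ) : Prop :=
  (∀ i u v, M i u v = M i v u) ∧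
  (∀ i u v, M i u v ≤ 1) ∧
  (∀ i v, ∑ u, M i v u ≤ 1) ∧
  (∀ u v, ∑ i, M i u v = G.mu u v)

/-- The chromatic index χ'(G): least k admitting a proper k-edge-colouring. -/
noncomputable def chromaticIndex (G : Multigraph V) : ℕ :=
  sInf { k | ∃ M, IsEdgeColoring G k M }

end Multigraph

namespace Multigraph

variable {V : Type*} [Fintype V]

/-- The t-core of G : induced submultigraph on the vertices v with
d_G(v) + μ_G(v) > Δ(G) + t. -/
def tCore (G : Multigraph V) (t : ℕ) : Multigraph V where
  mu u v := if (maxDeg G + t < deg G u + locMult G u) ∧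
               (maxDeg G + t < deg G v + locMult G v) then G.mu u v else 0
  symm u v := by
    try dsimp only
    by_cases h : (maxDeg G + t < deg G u + locMult G u) ∧
        (maxDeg G + t < deg G v + locMult G v)
    · rw [if_pos h, if_pos ⟨h.2, h.1⟩, G.symm]
    · rw [if_neg h, if_neg fun h' => h ⟨h'.2, h'.1⟩]
  loopless v := by
    try dsimp only
    split <;> simp [G.loopless]

end Multigraph

/-!
Induction on the number of edges, with `k = Δ(G) + t` colours. If `G` has an edge, pick an edge
`xw` such that every neighbour `z` of `x` has `d(z) + μ(x,z) ≤ k + 1`, with `d(z) + μ(x,z) > k`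
for at most one `z`. Such a heavy neighbour `z` lies in the core; if `x` does too, then
`μ(x,z) = t + 1`, so `xz` is an edge of `B`. Hence a non-isolated core vertex with at most one
`B`-neighbour among the non-isolated core vertices will do, and one exists because `B` is acyclic
(if there are no non-isolated core vertices, no vertex has a heavy neighbour at all).
Colour `G - xw` by induction. If the colouring did not extend, Vizing's argument (rotating colours
along a maximal fan at `x`, and Kempe chain swaps showing that the fan is elementary) yields fan
neighbours `Z ∋ w` of `x` with `∑ z ∈ Z, (d(z) + μ(x,z)) ≥ |Z| k + 2`, which the choice of `x`
rules out.
-/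

open scoped Finset

theorem Finset.card_filter_eq_one_of_le_one {ι : Type*} (s : Finset ι) {f : ι → ℕ}
    (hf : ∀ i ∈ s, f i ≤ 1) : #{i ∈ s | f i = 1} = ∑ i ∈ s, f i := by
  rw [Finset.card_filter]
  refine Finset.sum_congr rfl fun i hi => ?_
  have := hf i hi
  split <;> omega

namespace SimpleGraph

variable {W : Type*} {H : SimpleGraph W}

theorem IsAcyclic.exists_mem_subsingleton_neighborSet_inter [Finite W] (hH : H.IsAcyclic)
    {C : Set W} (hC : C.Nonempty) : ∃ x ∈ C, (H.neighborSet x ∩ C).Subsingleton := by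
  by_contra! hall
  have htwo (x : C) : ∃ y₁ y₂ : C, (H.induce C).Adj x y₁ ∧ (H.induce C).Adj x y₂ ∧ y₁ ≠ y₂ := by
    obtain ⟨y₁, ⟨h₁, hy₁⟩, y₂, ⟨h₂, hy₂⟩, hne⟩ := hall x x.2
    exact ⟨⟨y₁, hy₁⟩, ⟨y₂, hy₂⟩, h₁, h₂, fun h => hne (congrArg Subtype.val h)⟩
  have : Nonempty C := hC.to_subtype
  -- a longest path of `H.induce C` could be extended at its start
  obtain ⟨u, v, p, hp, hmax⟩ := Walk.exists_isPath_forall_isPath_length_le_length (H.induce C)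
  obtain ⟨y₁, y₂, h₁, h₂, hne⟩ := htwo u
  obtain ⟨y, hy, hyp⟩ : ∃ y, (H.induce C).Adj u y ∧ y ≠ p.snd := by
    by_cases h : y₁ = p.snd
    · exact ⟨y₂, h₂, fun h' => hne (h.trans h'.symm)⟩
    · exact ⟨y₁, h₁, h⟩
  have hy_notMem : y ∉ p.support := fun hmem =>
    hyp ((hH.induce C).eq_snd_of_adj_start hp hy hmem)
  have := hmax _ _ (p.cons hy.symm) (hp.cons hy_notMem)
  simp at this

variable [Fintype W] [DecidableRel H.Adj]

theorem Connected.card_filter_degree_le_one_le_two (hH : H.Connected)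
    (h2 : ∀ v, H.degree v ≤ 2) : #{v | H.degree v ≤ 1} ≤ 2 := by
  have hcard : Fintype.card W ≤ #H.edgeFinset + 1 := by
    have := hH.card_vert_le_card_edgeSet_add_one
    rwa [Nat.card_eq_fintype_card, Nat.card_eq_fintype_card, ← edgeFinset_card] at this
  have hsum : ∑ v, (H.degree v + if H.degree v ≤ 1 then 1 else 0) ≤ ∑ _v : W, 2 :=
    Finset.sum_le_sum fun v _ => by have := h2 v; split <;> omega
  rw [Finset.sum_add_distrib, sum_degrees_eq_twice_card_edges, ← Finset.card_filter,
    Finset.sum_const, Finset.card_univ, smul_eq_mul] at hsum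
  omega

theorem not_reachable_of_degree_le_one (h2 : ∀ v, H.degree v ≤ 2) {a b c : W}
    (hab : a ≠ b) (hac : a ≠ c) (hbc : b ≠ c) (ha : H.degree a ≤ 1) (hb : H.degree b ≤ 1)
    (hc : H.degree c ≤ 1) (hrb : H.Reachable a b) : ¬ H.Reachable a c := by
  classical
  intro hrc
  let C := H.connectedComponentMk a
  have hconn : (H.induce C.supp).Connected := C.connected_toSimpleGraph
  have hdeg (v : C.supp) : (H.induce C.supp).degree v = H.degree v := by
    convert degree_induce_of_neighborSet_subset fun _ hu => C.mem_supp_of_adj_mem_supp v.2 hu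
  let toC {v : W} (hv : H.Reachable a v) : C.supp := ⟨v, ConnectedComponent.sound hv.symm⟩
  have hmem {v : W} (hv : H.Reachable a v) (hdv : H.degree v ≤ 1) :
      toC hv ∈ ({v : C.supp | (H.induce C.supp).degree v ≤ 1} : Finset C.supp) := by
    simpa [hdeg] using hdv
  have hle := hconn.card_filter_degree_le_one_le_two fun v => (hdeg v).symm ▸ h2 v
  have hlt : 2 < #{v : C.supp | (H.induce C.supp).degree v ≤ 1} :=
    Finset.two_lt_card.2 ⟨toC .rfl, hmem .rfl ha, toC hrb, hmem hrb hb, toC hrc, hmem hrc hc,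
      fun h => hab (congrArg Subtype.val h), fun h => hac (congrArg Subtype.val h),
      fun h => hbc (congrArg Subtype.val h)⟩
  omega

end SimpleGraph

namespace Multigraph

variable {V : Type*}

theorem ext {G H : Multigraph V} (h : ∀ u v, G.mu u v = H.mu u v) : G = H := by
  cases G; cases H; congr; funext u v; exact h u v

theorem mu_eq_of_sym2_eq (G : Multigraph V) {u v x y : V} (h : s(u, v) = s(x, y)) :
    G.mu u v = G.mu x y := by
  rcases Sym2.eq_iff.1 h with ⟨rfl, rfl⟩ | ⟨rfl, rfl⟩
  · rfl
  · exact G.symm _ _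

theorem ne_of_mu_pos (G : Multigraph V) {u v : V} (h : 0 < G.mu u v) : u ≠ v := by
  rintro rfl
  simp [G.loopless] at h

section DecidableEq

variable [DecidableEq V]

def edgeIndicator (x y u v : V) : ℕ := if s(u, v) = s(x, y) then 1 else 0

theorem edgeIndicator_comm (x y u v : V) : edgeIndicator x y u v = edgeIndicator x y v u := by
  simp only [edgeIndicator, Sym2.eq_swap (a := u)]

theorem edgeIndicator_left (x y v : V) : edgeIndicator x y x v = if v = y then 1 else 0 := by
  simp only [edgeIndicator, Sym2.congr_right]

theorem edgeIndicator_eq_zero {x y u : V} (hx : u ≠ x) (hy : u ≠ y) (v : V) :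
    edgeIndicator x y u v = 0 := by
  simp [edgeIndicator, hx, hy]

theorem edgeIndicator_eq_zero_of_ne {x y u v : V} (hu : u ≠ x) (hv : v ≠ x) :
    edgeIndicator x y u v = 0 := by
  simp [edgeIndicator, hu, hv]

def eraseEdge (G : Multigraph V) (x y : V) : Multigraph V where
  mu u v := G.mu u v - edgeIndicator x y u v
  symm u v := by rw [G.symm, edgeIndicator_comm]
  loopless v := by simp [G.loopless]

theorem mu_eraseEdge (G : Multigraph V) (x y u v : V) :
    (G.eraseEdge x y).mu u v = G.mu u v - edgeIndicator x y u v := rfl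

theorem mu_eraseEdge_le (G : Multigraph V) (x y u v : V) : (G.eraseEdge x y).mu u v ≤ G.mu u v :=
  Nat.sub_le _ _

theorem mu_eraseEdge_of_ne (G : Multigraph V) {x y u v : V} (h : s(u, v) ≠ s(x, y)) :
    (G.eraseEdge x y).mu u v = G.mu u v := by
  simp [mu_eraseEdge, edgeIndicator, h]

theorem mu_eraseEdge_add {G : Multigraph V} {x y : V} (h : 0 < G.mu x y) (u v : V) :
    (G.eraseEdge x y).mu u v + edgeIndicator x y u v = G.mu u v := by
  rw [mu_eraseEdge, edgeIndicator]
  split_ifs with huv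
  · have := G.mu_eq_of_sym2_eq huv
    omega
  · omega

theorem eraseEdge_comm (G : Multigraph V) (x y u v : V) :
    (G.eraseEdge x y).eraseEdge u v = (G.eraseEdge u v).eraseEdge x y :=
  ext fun a b => by simp only [mu_eraseEdge]; omega

theorem mu_eraseEdge_eraseEdge_add {G : Multigraph V} {x w z : V} (hxw : 0 < G.mu x w)
    (hxz : 0 < (G.eraseEdge x w).mu x z) (u v : V) :
    ((G.eraseEdge x w).eraseEdge x z).mu u v + edgeIndicator x w u v =
      (G.eraseEdge x z).mu u v := by
  rw [eraseEdge_comm]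
  refine mu_eraseEdge_add ?_ u v
  by_cases hzw : z = w
  · subst hzw
    exact hxz
  · rwa [mu_eraseEdge_of_ne G (Sym2.congr_right.not.2 (Ne.symm hzw))]

end DecidableEq

variable [Fintype V]

theorem mu_le_locMult (G : Multigraph V) (v u : V) : G.mu v u ≤ G.locMult v :=
  Finset.le_sup (Finset.mem_univ u)

theorem mu_le_deg (G : Multigraph V) (v u : V) : G.mu v u ≤ G.deg v :=
  Finset.single_le_sum (f := G.mu v) (fun _ _ => Nat.zero_le _) (Finset.mem_univ u)

theorem deg_le_maxDeg (G : Multigraph V) (v : V) : G.deg v ≤ G.maxDeg :=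
  Finset.le_sup (Finset.mem_univ v)

theorem deg_mono {G H : Multigraph V} (h : ∀ u v, G.mu u v ≤ H.mu u v) (v : V) :
    G.deg v ≤ H.deg v :=
  Finset.sum_le_sum fun u _ => h v u

theorem locMult_mono {G H : Multigraph V} (h : ∀ u v, G.mu u v ≤ H.mu u v) (v : V) :
    G.locMult v ≤ H.locMult v :=
  Finset.sup_mono_fun fun u _ => h v u

variable [DecidableEq V]

theorem sum_edgeIndicator_left (x y : V) : ∑ u, edgeIndicator x y x u = 1 := by
  simp [edgeIndicator_left]

theorem sum_edgeIndicator_of_ne {x y v : V} (hv : v ≠ x) :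
    ∑ u, edgeIndicator x y v u = if v = y then 1 else 0 := by
  by_cases hvy : v = y
  · subst hvy
    simp [edgeIndicator, hv]
  · simp [edgeIndicator_eq_zero hv hvy, hvy]

theorem sum_edgeIndicator_le_one (x y v : V) : ∑ u, edgeIndicator x y v u ≤ 1 := by
  by_cases hv : v = x
  · rw [hv, sum_edgeIndicator_left]
  · rw [sum_edgeIndicator_of_ne hv]; split <;> omega

theorem deg_eraseEdge_add {G : Multigraph V} {x y : V} (h : 0 < G.mu x y) (v : V) :
    (G.eraseEdge x y).deg v + ∑ u, edgeIndicator x y v u = G.deg v := by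
  simp only [deg, ← Finset.sum_add_distrib, mu_eraseEdge_add h]

theorem deg_eraseEdge_add_one {G : Multigraph V} {x y : V} (h : 0 < G.mu x y) :
    (G.eraseEdge x y).deg x + 1 = G.deg x := by
  simpa [sum_edgeIndicator_left] using deg_eraseEdge_add h x

theorem sum_deg_add_mu_eraseEdge {G : Multigraph V} {x w : V} (h : 0 < G.mu x w)
    {Z : Finset V} (hw : w ∈ Z) (hx : x ∉ Z) :
    ∑ v ∈ Z, ((G.eraseEdge x w).deg v + (G.eraseEdge x w).mu x v) + 2 =
      ∑ v ∈ Z, (G.deg v + G.mu x v) := by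
  have hv : ∀ v ∈ Z, G.deg v + G.mu x v =
      (G.eraseEdge x w).deg v + (G.eraseEdge x w).mu x v + if v = w then 2 else 0 := by
    intro v hvZ
    have h1 := deg_eraseEdge_add h v
    have h2 := mu_eraseEdge_add h x v
    rw [sum_edgeIndicator_of_ne fun hvx : v = x => hx (hvx ▸ hvZ)] at h1
    rw [edgeIndicator_left] at h2
    split_ifs at h1 h2 ⊢ <;> omega
  rw [Finset.sum_congr rfl hv, Finset.sum_add_distrib (g := fun v => if v = w then 2 else 0),
    Finset.sum_ite_eq', if_pos hw]

end Multigraph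

namespace Multigraph

variable {V : Type*} [Fintype V]

structure EdgeColoring (G : Multigraph V) (k : ℕ) where
  M : Fin k → V → V → ℕ
  symm : ∀ i u v, M i u v = M i v u
  le_one : ∀ i u v, M i u v ≤ 1
  sum_le_one : ∀ i v, ∑ u, M i v u ≤ 1
  sum_eq_mu : ∀ u v, ∑ i, M i u v = G.mu u v

namespace EdgeColoring

variable {G : Multigraph V} {k : ℕ}

theorem chromaticIndex_le (φ : G.EdgeColoring k) : G.chromaticIndex ≤ k :=
  Nat.sInf_le ⟨φ.M, φ.symm, φ.le_one, φ.sum_le_one, φ.sum_eq_mu⟩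

def ofMuEqZero (h : ∀ u v, G.mu u v = 0) (k : ℕ) : G.EdgeColoring k where
  M _ _ _ := 0
  symm _ _ _ := rfl
  le_one _ _ _ := zero_le_one
  sum_le_one _ _ := by simp
  sum_eq_mu u v := by simp [h u v]

variable (φ : G.EdgeColoring k)

theorem M_le_mu (i : Fin k) (u v : V) : φ.M i u v ≤ G.mu u v :=
  φ.sum_eq_mu u v ▸ Finset.single_le_sum (f := fun j => φ.M j u v) (fun _ _ => Nat.zero_le _)
    (Finset.mem_univ i)

theorem M_eq_of_sym2_eq (i : Fin k) {u v x y : V} (h : s(u, v) = s(x, y)) :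
    φ.M i u v = φ.M i x y := by
  rcases Sym2.eq_iff.1 h with ⟨rfl, rfl⟩ | ⟨rfl, rfl⟩
  · rfl
  · exact φ.symm _ _ _

theorem M_eq_zero_of_M_eq_one {i : Fin k} {v u w : V} (hu : φ.M i v u = 1) (hw : w ≠ u) :
    φ.M i v w = 0 := by
  have := Finset.add_le_sum (f := φ.M i v) (fun _ _ => Nat.zero_le _) (Finset.mem_univ u)
    (Finset.mem_univ w) hw.symm
  have := φ.sum_le_one i v
  omega

def IsMissing (i : Fin k) (v : V) : Prop := ∀ u, φ.M i v u = 0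

instance (i : Fin k) (v : V) : Decidable (φ.IsMissing i v) :=
  inferInstanceAs (Decidable (∀ u, φ.M i v u = 0))

variable {φ}

theorem not_isMissing_of_M_eq_one {i : Fin k} {v u : V} (h : φ.M i v u = 1) :
    ¬ φ.IsMissing i v :=
  fun hm => by simp [hm u] at h

theorem exists_M_eq_one_of_not_isMissing {i : Fin k} {v : V} (h : ¬ φ.IsMissing i v) :
    ∃ u, φ.M i v u = 1 := by
  simp only [IsMissing, not_forall] at h
  obtain ⟨u, hu⟩ := h
  exact ⟨u, by have := φ.le_one i v u; omega⟩

theorem isMissing_iff_sum_eq_zero {i : Fin k} {v : V} :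
    φ.IsMissing i v ↔ ∑ u, φ.M i v u = 0 := by
  simp [IsMissing, Finset.sum_eq_zero_iff]

theorem isMissing_congr {G' : Multigraph V} {ψ : G'.EdgeColoring k} {i : Fin k}
    (h : ψ.M i = φ.M i) (v : V) : ψ.IsMissing i v ↔ φ.IsMissing i v := by
  simp [IsMissing, h]

variable (φ) in
def missingColors (v : V) : Finset (Fin k) := {i | φ.IsMissing i v}

theorem mem_missingColors {i : Fin k} {v : V} : i ∈ φ.missingColors v ↔ φ.IsMissing i v := by
  simp [missingColors]

variable (φ) in
theorem card_missingColors_add_deg (v : V) : #(φ.missingColors v) + G.deg v = k := by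
  have hdeg : G.deg v = #{i | ¬ φ.IsMissing i v} := by
    have hcard := Finset.card_filter_eq_one_of_le_one Finset.univ
      (f := fun i => ∑ u, φ.M i v u) fun i _ => φ.sum_le_one i v
    simp only [deg, ← φ.sum_eq_mu, Finset.sum_comm (f := fun u i => φ.M i v u), ← hcard]
    congr 1
    ext i
    have := φ.sum_le_one i v
    simp only [Finset.mem_filter, Finset.mem_univ, true_and, isMissing_iff_sum_eq_zero]
    omega
  rw [hdeg, missingColors, Finset.card_filter_add_card_filter_not, Finset.card_univ,
    Fintype.card_fin]

theorem exists_isMissing {v : V} (h : G.deg v < k) : ∃ i, φ.IsMissing i v := by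
  have := φ.card_missingColors_add_deg v
  obtain ⟨i, hi⟩ := Finset.card_pos.1 (show 0 < #(φ.missingColors v) by omega)
  exact ⟨i, (Finset.mem_filter.1 hi).2⟩

variable (φ) in
theorem card_filter_M_eq_one (u v : V) : #{i | φ.M i u v = 1} = G.mu u v := by
  rw [Finset.card_filter_eq_one_of_le_one _ fun i _ => φ.le_one i u v, φ.sum_eq_mu]

end EdgeColoring

end Multigraph

namespace Multigraph.EdgeColoring

variable {V : Type*} [Fintype V] [DecidableEq V] {G G' : Multigraph V} {k : ℕ}

def addEdge (φ : G'.EdgeColoring k) {x y : V}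
    (hG : ∀ u v, G'.mu u v + edgeIndicator x y u v = G.mu u v) (c : Fin k)
    (hx : φ.IsMissing c x) (hy : φ.IsMissing c y) : G.EdgeColoring k where
  M i u v := φ.M i u v + if i = c then edgeIndicator x y u v else 0
  symm i u v := by rw [φ.symm, edgeIndicator_comm]
  le_one i u v := by
    unfold edgeIndicator
    split_ifs with hi huv
    · rw [φ.M_eq_of_sym2_eq i huv, hi, hx y]
    all_goals simp [φ.le_one]
  sum_le_one i v := by
    rw [Finset.sum_add_distrib]
    split_ifs with hi
    · subst hi
      by_cases hv : v = x ∨ v = y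
      · have hzero : ∑ u, φ.M i v u = 0 := by
          rcases hv with rfl | rfl <;> simp [hx _, hy _]
        rw [hzero, zero_add]
        exact sum_edgeIndicator_le_one x y v
      · push Not at hv
        simp [edgeIndicator_eq_zero hv.1 hv.2, φ.sum_le_one]
    · simp [φ.sum_le_one]
  sum_eq_mu u v := by
    rw [Finset.sum_add_distrib, Finset.sum_ite_eq', if_pos (Finset.mem_univ c), φ.sum_eq_mu,
      hG]

def removeEdge (φ : G.EdgeColoring k) {x y : V} (c : Fin k) (hc : φ.M c x y = 1) :
    (G.eraseEdge x y).EdgeColoring k where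
  M i u v := φ.M i u v - if i = c then edgeIndicator x y u v else 0
  symm i u v := by rw [φ.symm, edgeIndicator_comm]
  le_one i u v := (Nat.sub_le _ _).trans (φ.le_one i u v)
  sum_le_one i v := (Finset.sum_le_sum fun u _ => Nat.sub_le _ _).trans (φ.sum_le_one i v)
  sum_eq_mu u v := by
    have hle : ∀ i ∈ Finset.univ, (if i = c then edgeIndicator x y u v else 0) ≤ φ.M i u v := by
      intro i _
      by_cases hi : i = c
      · subst hi
        rw [if_pos rfl, edgeIndicator]
        split_ifs with huv
        · rw [φ.M_eq_of_sym2_eq _ huv, hc]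
        · exact Nat.zero_le _
      · simp [hi]
    rw [Finset.sum_tsub_distrib _ hle, Finset.sum_ite_eq', if_pos (Finset.mem_univ c),
      φ.sum_eq_mu, mu_eraseEdge]

theorem removeEdge_isMissing_left (φ : G.EdgeColoring k) {x y : V} {c : Fin k}
    (hc : φ.M c x y = 1) : (φ.removeEdge c hc).IsMissing c x := fun u => by
  by_cases hu : u = y
  · simp [removeEdge, hu, hc, edgeIndicator]
  · simp [removeEdge, φ.M_eq_zero_of_M_eq_one hc hu]

theorem removeEdge_isMissing {φ : G.EdgeColoring k} {x y w : V} {c : Fin k}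
    (hc : φ.M c x y = 1) (hw : φ.IsMissing c w) : (φ.removeEdge c hc).IsMissing c w :=
  fun u => by simp [removeEdge, hw u]

section shift

variable {x w z : V} {c : Fin k} (φ : (G.eraseEdge x w).EdgeColoring k) (hxw : 0 < G.mu x w)
  (hc : φ.M c x z = 1) (hw : φ.IsMissing c w)

def shift : (G.eraseEdge x z).EdgeColoring k :=
  (φ.removeEdge c hc).addEdge
    (mu_eraseEdge_eraseEdge_add hxw (Nat.lt_of_lt_of_le Nat.one_pos (hc ▸ φ.M_le_mu c x z))) c
    (φ.removeEdge_isMissing_left hc) (removeEdge_isMissing hc hw)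

variable {φ hxw hc hw}

theorem shift_M_of_ne {i : Fin k} (hi : i ≠ c) : (φ.shift hxw hc hw).M i = φ.M i := by
  funext u v
  simp [shift, addEdge, removeEdge, hi]

theorem shift_M_of_ne_left (i : Fin k) {u v : V} (hu : u ≠ x) (hv : v ≠ x) :
    (φ.shift hxw hc hw).M i u v = φ.M i u v := by
  simp [shift, addEdge, removeEdge, edgeIndicator_eq_zero_of_ne hu hv]

theorem shift_isMissing_iff (i : Fin k) :
    (φ.shift hxw hc hw).IsMissing i x ↔ φ.IsMissing i x := by
  by_cases hi : i = c
  · subst hi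
    refine iff_of_false (fun h => ?_) (not_isMissing_of_M_eq_one hc)
    have := h w
    simp [shift, addEdge, edgeIndicator_left] at this
  · exact isMissing_congr (shift_M_of_ne hi) x

end shift

end Multigraph.EdgeColoring

namespace Multigraph.EdgeColoring

variable {V : Type*} [Fintype V] {G : Multigraph V} {k : ℕ} (φ : G.EdgeColoring k)

def kempeGraph (α β : Fin k) : SimpleGraph V where
  Adj u v := u ≠ v ∧ (φ.M α u v = 1 ∨ φ.M β u v = 1)
  symm := ⟨fun u v h => ⟨h.1.symm, by rw [φ.symm α v u, φ.symm β v u]; exact h.2⟩⟩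
  loopless := ⟨fun _ h => h.1 rfl⟩

instance [DecidableEq V] (α β : Fin k) : DecidableRel (φ.kempeGraph α β).Adj :=
  fun u v => inferInstanceAs (Decidable (u ≠ v ∧ (φ.M α u v = 1 ∨ φ.M β u v = 1)))

variable {φ}

theorem degree_kempeGraph_le [DecidableEq V] (α β : Fin k) (v : V) :
    (φ.kempeGraph α β).degree v ≤ (∑ u, φ.M α v u) + ∑ u, φ.M β v u := by
  rw [← SimpleGraph.card_neighborFinset_eq_degree,
    ← Finset.card_filter_eq_one_of_le_one _ fun u _ => φ.le_one α v u,
    ← Finset.card_filter_eq_one_of_le_one _ fun u _ => φ.le_one β v u]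
  refine (Finset.card_le_card fun u hu => ?_).trans (Finset.card_union_le _ _)
  simp only [SimpleGraph.mem_neighborFinset] at hu
  simpa [Finset.mem_union] using hu.2

theorem M_eq_zero_of_reachable_of_not_reachable {α β i : Fin k} {a u v : V}
    (hu : (φ.kempeGraph α β).Reachable a u) (hv : ¬ (φ.kempeGraph α β).Reachable a v)
    (hi : i = α ∨ i = β) : φ.M i u v = 0 := by
  by_contra h
  have h1 : φ.M i u v = 1 := by have := φ.le_one i u v; omega
  have hne : u ≠ v := by rintro rfl; exact hv hu
  exact hv (hu.trans (SimpleGraph.Adj.reachable ⟨hne, by rcases hi with rfl | rfl <;> simp [h1]⟩))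

theorem M_swap_of_reachable_of_not_reachable {α β : Fin k} (i : Fin k) {a u v : V}
    (hu : (φ.kempeGraph α β).Reachable a u) (hv : ¬ (φ.kempeGraph α β).Reachable a v) :
    φ.M (Equiv.swap α β i) u v = φ.M i u v := by
  have hα := M_eq_zero_of_reachable_of_not_reachable hu hv (.inl rfl)
  have hβ := M_eq_zero_of_reachable_of_not_reachable hu hv (.inr rfl)
  rw [Equiv.swap_apply_def]
  split_ifs with h₁ h₂ <;> simp_all

variable (φ)

open Classical in
/-- Proper because no edge of colour `α` or `β` leaves the Kempe chain through `a`. -/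
noncomputable def kempeSwap (α β : Fin k) (a : V) : G.EdgeColoring k where
  M i u v := φ.M (if (φ.kempeGraph α β).Reachable a u then Equiv.swap α β i else i) u v
  symm i u v := by
    by_cases hu : (φ.kempeGraph α β).Reachable a u <;>
      by_cases hv : (φ.kempeGraph α β).Reachable a v <;>
      simp only [hu, hv, if_true, if_false]
    · exact φ.symm _ u v
    · exact (M_swap_of_reachable_of_not_reachable i hu hv).trans (φ.symm i u v)
    · exact (φ.symm i u v).trans (M_swap_of_reachable_of_not_reachable i hv hu).symm
    · exact φ.symm i u v
  le_one i u v := φ.le_one _ u v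
  sum_le_one i v := φ.sum_le_one _ v
  sum_eq_mu u v := by
    split_ifs
    · exact (Equiv.sum_comp (Equiv.swap α β) (fun i => φ.M i u v)).trans (φ.sum_eq_mu u v)
    · exact φ.sum_eq_mu u v

variable {φ} {α β : Fin k} {a : V}

theorem kempeSwap_M_of_not_reachable {u : V} (hu : ¬ (φ.kempeGraph α β).Reachable a u)
    (i : Fin k) (v : V) : (φ.kempeSwap α β a).M i u v = φ.M i u v := by
  simp [kempeSwap, hu]

theorem kempeSwap_isMissing_of_not_reachable {v : V} (hv : ¬ (φ.kempeGraph α β).Reachable a v)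
    (i : Fin k) : (φ.kempeSwap α β a).IsMissing i v ↔ φ.IsMissing i v := by
  simp [IsMissing, kempeSwap_M_of_not_reachable hv]

theorem kempeSwap_isMissing_of_reachable {v : V} (hv : (φ.kempeGraph α β).Reachable a v)
    (i : Fin k) : (φ.kempeSwap α β a).IsMissing i v ↔ φ.IsMissing (Equiv.swap α β i) v := by
  simp [IsMissing, kempeSwap, hv]

/-- The Kempe graph has maximum degree two, and degree at most one at `x`, `y` and `z`. -/
theorem not_reachable_of_isMissing [DecidableEq V] {x y z : V} (hx : φ.IsMissing α x)
    (hy : φ.IsMissing β y) (hz : φ.IsMissing β z) (hxy : x ≠ y) (hxz : x ≠ z) (hyz : y ≠ z)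
    (hry : (φ.kempeGraph α β).Reachable x y) : ¬ (φ.kempeGraph α β).Reachable x z := by
  have hsum (i : Fin k) (v : V) (hv : φ.IsMissing i v) : ∑ u, φ.M i v u = 0 :=
    isMissing_iff_sum_eq_zero.1 hv
  have hle (v : V) := degree_kempeGraph_le (φ := φ) α β v
  refine SimpleGraph.not_reachable_of_degree_le_one (fun v => ?_) hxy hxz hyz ?_ ?_ ?_ hry
  · have := φ.sum_le_one α v; have := φ.sum_le_one β v; have := hle v; omega
  · have := φ.sum_le_one β x; have := hle x; have := hsum _ _ hx; omega
  · have := φ.sum_le_one α y; have := hle y; have := hsum _ _ hy; omega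
  · have := φ.sum_le_one α z; have := hle z; have := hsum _ _ hz; omega

end Multigraph.EdgeColoring

namespace Multigraph

open EdgeColoring

variable {V : Type*} [Fintype V] {G' : Multigraph V} {k : ℕ}

/-- The fan proper is indexed by `0 < i ≤ n`; when `φ` colours `G - x (z 0)`, the vertex `z 0`
is the other end of the uncoloured edge at `x`. -/
structure IsFan (φ : G'.EdgeColoring k) (x : V) (z : ℕ → V) (c : ℕ → Fin k) (n : ℕ) : Prop where
  M_eq_one : ∀ i, 0 < i → i ≤ n → φ.M (c i) x (z i) = 1
  exists_isMissing : ∀ i, 0 < i → i ≤ n → ∃ j < i, φ.IsMissing (c i) (z j)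
  injOn : Set.InjOn c (Set.Ioc 0 n)

namespace IsFan

variable {φ : G'.EdgeColoring k} {x : V} {z : ℕ → V} {c : ℕ → Fin k} {n : ℕ}

theorem zero : IsFan φ x z c 0 where
  M_eq_one _ h0 hi := absurd hi (by omega)
  exists_isMissing _ h0 hi := absurd hi (by omega)
  injOn := by simp

theorem mono (hF : IsFan φ x z c n) {m : ℕ} (hm : m ≤ n) : IsFan φ x z c m where
  M_eq_one i h0 hi := hF.M_eq_one i h0 (hi.trans hm)
  exists_isMissing i h0 hi := hF.exists_isMissing i h0 (hi.trans hm)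
  injOn := hF.injOn.mono (Set.Ioc_subset_Ioc_right hm)

theorem ne_of_isMissing (hF : IsFan φ x z c n) {b : Fin k} (hb : φ.IsMissing b x) {i : ℕ}
    (h0 : 0 < i) (hi : i ≤ n) : c i ≠ b := by
  rintro rfl
  exact not_isMissing_of_M_eq_one (hF.M_eq_one i h0 hi) hb

theorem length_le (hF : IsFan φ x z c n) : n ≤ k := by
  have := Finset.card_le_card_of_injOn c (s := Finset.Ioc 0 n) (t := Finset.univ)
    (fun _ _ => Finset.mem_univ _) (by simpa using hF.injOn)
  simpa using this

theorem snoc (hF : IsFan φ x z c n) {γ : Fin k} {u : V} {j : ℕ} (hu : φ.M γ x u = 1)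
    (hj : j ≤ n) (hγ : φ.IsMissing γ (z j)) (hnew : ∀ i, 0 < i → i ≤ n → c i ≠ γ) :
    IsFan φ x (Function.update z (n + 1) u) (Function.update c (n + 1) γ) (n + 1) where
  M_eq_one i h0 hi := by
    rcases hi.lt_or_eq with hi | rfl
    · simpa [Function.update_of_ne hi.ne] using hF.M_eq_one i h0 (by omega)
    · simpa using hu
  exists_isMissing i h0 hi := by
    rcases hi.lt_or_eq with hi | rfl
    · obtain ⟨j', hj', hγj'⟩ := hF.exists_isMissing i h0 (by omega)
      exact ⟨j', hj', by
        simpa [Function.update_of_ne hi.ne, Function.update_of_ne (hj'.trans hi).ne] using hγj'⟩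
    · exact ⟨j, by omega, by simpa [Function.update_of_ne (show j ≠ n + 1 by omega)] using hγ⟩
  injOn i hi i' hi' h := by
    simp only [Set.mem_Ioc] at hi hi'
    rcases hi.2.lt_or_eq with hlt | rfl <;> rcases hi'.2.lt_or_eq with hlt' | rfl
    · simp only [Function.update_of_ne hlt.ne, Function.update_of_ne hlt'.ne] at h
      exact hF.injOn ⟨hi.1, by omega⟩ ⟨hi'.1, by omega⟩ h
    · simp only [Function.update_of_ne hlt.ne, Function.update_self] at h
      exact absurd h (hnew i hi.1 (by omega))
    · simp only [Function.update_of_ne hlt'.ne, Function.update_self] at h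
      exact absurd h.symm (hnew i' hi'.1 (by omega))
    · rfl

theorem kempeSwap (hF : IsFan φ x z c n) {α β : Fin k} {a : V} (hα : φ.IsMissing α x)
    (hx : ¬ (φ.kempeGraph α β).Reachable a x)
    (hz : ∀ j < n, φ.IsMissing β (z j) → ¬ (φ.kempeGraph α β).Reachable a (z j)) :
    IsFan (φ.kempeSwap α β a) x z c n where
  M_eq_one i h0 hi := by
    rw [kempeSwap_M_of_not_reachable hx]
    exact hF.M_eq_one i h0 hi
  exists_isMissing i h0 hi := by
    obtain ⟨j, hji, hj⟩ := hF.exists_isMissing i h0 hi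
    refine ⟨j, hji, ?_⟩
    by_cases hr : (φ.kempeGraph α β).Reachable a (z j)
    · have hcβ : c i ≠ β := fun h => hz j (by omega) (h ▸ hj) hr
      rwa [kempeSwap_isMissing_of_reachable hr,
        Equiv.swap_apply_of_ne_of_ne (hF.ne_of_isMissing hα h0 hi) hcβ]
    · rwa [kempeSwap_isMissing_of_not_reachable hr]
  injOn := hF.injOn

variable (φ x) in
theorem exists_maximal [NeZero k] (w : V) :
    ∃ z c n, z 0 = w ∧ IsFan φ x z c n ∧ ∀ γ u j, φ.M γ x u = 1 → j ≤ n →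
      φ.IsMissing γ (z j) → ∃ i, 0 < i ∧ i ≤ n ∧ c i = γ := by
  classical
  let P n := ∃ z c, z 0 = w ∧ IsFan φ x z c n
  have hP0 : P 0 := ⟨fun _ => w, fun _ => 0, rfl, zero⟩
  obtain ⟨z, c, hz0, hF⟩ := Nat.findGreatest_spec (Nat.zero_le k) hP0
  refine ⟨z, c, _, hz0, hF, fun γ u j hu hj hγ => ?_⟩
  by_contra! hnew
  have hF' := hF.snoc hu hj hγ hnew
  exact Nat.findGreatest_is_greatest (Nat.lt_succ_self _) hF'.length_le
    ⟨_, _, by simp [Function.update_of_ne, hz0], hF'⟩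

variable [DecidableEq V] {G : Multigraph V} {φ : (G.eraseEdge x (z 0)).EdgeColoring k}

theorem pos_mu (hF : IsFan φ x z c n) (h0 : 0 < G.mu x (z 0)) {i : ℕ} (hi : i ≤ n) :
    0 < G.mu x (z i) := by
  rcases Nat.eq_zero_or_pos i with rfl | hpos
  · exact h0
  · have := φ.M_le_mu (c i) x (z i)
    have := G.mu_eraseEdge_le x (z 0) x (z i)
    have := hF.M_eq_one i hpos hi
    omega

theorem exists_rotate (hF : IsFan φ x z c n) (h0 : 0 < G.mu x (z 0)) {i : ℕ} (hi : i ≤ n) :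
    ∃ ψ : (G.eraseEdge x (z i)).EdgeColoring k,
      (∀ b u v, u ≠ x → v ≠ x → ψ.M b u v = φ.M b u v) ∧
      (∀ b, (∀ j, 0 < j → j ≤ i → c j ≠ b) → ψ.M b = φ.M b) ∧
      ∀ b, ψ.IsMissing b x ↔ φ.IsMissing b x := by
  induction i using Nat.strong_induction_on with
  | _ i ih =>
  rcases Nat.eq_zero_or_pos i with rfl | hpos
  · exact ⟨φ, fun _ _ _ _ _ => rfl, fun _ _ => rfl, fun _ => Iff.rfl⟩
  obtain ⟨j, hji, hmiss⟩ := hF.exists_isMissing i hpos hi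
  obtain ⟨ψ, hA, hB, hC⟩ := ih j hji (by omega)
  have hψi : ψ.M (c i) = φ.M (c i) := hB _ fun j' h0' hj' =>
    hF.injOn.ne ⟨h0', by omega⟩ ⟨hpos, hi⟩ (by omega)
  have hM : ψ.M (c i) x (z i) = 1 := by rw [hψi]; exact hF.M_eq_one i hpos hi
  have hmiss' : ψ.IsMissing (c i) (z j) := (isMissing_congr hψi _).2 hmiss
  refine ⟨ψ.shift (hF.pos_mu h0 (by omega)) hM hmiss', fun b u v hu hv => ?_, fun b hb => ?_,
    fun b => ?_⟩
  · rw [shift_M_of_ne_left b hu hv, hA b u v hu hv]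
  · rw [shift_M_of_ne (hb i hpos le_rfl).symm, hB b fun j' h0' hj' => hb j' h0' (by omega)]
  · rw [shift_isMissing_iff, hC]

theorem nonempty_of_isMissing (hF : IsFan φ x z c n) (h0 : 0 < G.mu x (z 0)) {i : ℕ}
    {γ : Fin k} (hi : i ≤ n) (hx : φ.IsMissing γ x) (hz : φ.IsMissing γ (z i)) :
    Nonempty (G.EdgeColoring k) := by
  obtain ⟨ψ, -, hB, hC⟩ := hF.exists_rotate h0 hi
  have hγ : ψ.M γ = φ.M γ := hB γ fun j h0' hj => hF.ne_of_isMissing hx h0' (hj.trans hi)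
  exact ⟨ψ.addEdge (mu_eraseEdge_add (hF.pos_mu h0 hi)) γ ((hC γ).2 hx)
    ((isMissing_congr hγ _).2 hz)⟩

/-- The fan is elementary. -/
theorem eq_of_isMissing (hF : IsFan φ x z c n) (h0 : 0 < G.mu x (z 0)) (hx : G.deg x ≤ k)
    (hG : IsEmpty (G.EdgeColoring k)) {a b : ℕ} {γ : Fin k} (ha : a ≤ n) (hb : b ≤ n)
    (hγa : φ.IsMissing γ (z a)) (hγb : φ.IsMissing γ (z b)) : z a = z b := by
  by_contra hab
  have hdeg : (G.eraseEdge x (z 0)).deg x < k := by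
    have := deg_eraseEdge_add_one h0
    omega
  obtain ⟨α, hα⟩ := EdgeColoring.exists_isMissing (φ := φ) hdeg
  have hxz {i : ℕ} (hi : i ≤ n) : x ≠ z i := G.ne_of_mu_pos (hF.pos_mu h0 hi)
  -- a fan vertex missing `γ` outside the `α`/`γ` chain of `x`, chosen with least index
  have hex : ∃ i, i ≤ n ∧ φ.IsMissing γ (z i) ∧ ¬ (φ.kempeGraph α γ).Reachable x (z i) := by
    by_contra! h
    exact not_reachable_of_isMissing hα hγa hγb (hxz ha) (hxz hb) hab (h a ha hγa) (h b hb hγb)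
  obtain ⟨hm, hγm, hxm⟩ := Nat.find_spec hex
  -- swapping that chain keeps the fan up to it, and makes `α` missing there as well as at `x`
  have hF' : IsFan (φ.kempeSwap α γ (z (Nat.find hex))) x z c (Nat.find hex) :=
    (hF.mono hm).kempeSwap hα (fun h => hxm h.symm) fun j hj hγj hr =>
      Nat.find_min hex hj ⟨by omega, hγj, fun hxj => hxm (hxj.trans hr.symm)⟩
  have hαx := (kempeSwap_isMissing_of_not_reachable (fun h => hxm h.symm) α).2 hα
  have hαm : (φ.kempeSwap α γ (z (Nat.find hex))).IsMissing α (z (Nat.find hex)) := by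
    rwa [kempeSwap_isMissing_of_reachable .rfl, Equiv.swap_apply_left]
  exact hG.false (hF'.nonempty_of_isMissing h0 le_rfl hαx hαm).some

end IsFan

end Multigraph

namespace Multigraph

open EdgeColoring

variable {V : Type*} [Fintype V] [DecidableEq V] {G : Multigraph V} {k : ℕ}

namespace IsFan

variable {x : V} {z : ℕ → V} {c : ℕ → Fin k} {n : ℕ} {φ : (G.eraseEdge x (z 0)).EdgeColoring k}

/-- The missing colours at the fan vertices are disjoint and, by maximality, all appear on
edges from `x` into the fan. -/
theorem card_mul_le_sum (hF : IsFan φ x z c n) (h0 : 0 < G.mu x (z 0)) (hx : G.deg x ≤ k)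
    (hG : IsEmpty (G.EdgeColoring k))
    (hmax : ∀ γ u j, φ.M γ x u = 1 → j ≤ n → φ.IsMissing γ (z j) →
      ∃ i, 0 < i ∧ i ≤ n ∧ c i = γ) :
    #((Finset.range (n + 1)).image z) * k ≤ ∑ v ∈ (Finset.range (n + 1)).image z,
      ((G.eraseEdge x (z 0)).deg v + (G.eraseEdge x (z 0)).mu x v) := by
  set Z := (Finset.range (n + 1)).image z
  have hmemZ {v : V} (hv : v ∈ Z) : ∃ j ≤ n, z j = v := by
    simpa [Z, Nat.lt_succ_iff] using hv
  have hdisj : (Z : Set V).PairwiseDisjoint φ.missingColors := by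
    intro u hu v hv huv
    obtain ⟨a, ha, rfl⟩ := hmemZ hu
    obtain ⟨b, hb, rfl⟩ := hmemZ hv
    refine Finset.disjoint_left.2 fun γ hγa hγb => huv ?_
    exact hF.eq_of_isMissing h0 hx hG ha hb (mem_missingColors.1 hγa) (mem_missingColors.1 hγb)
  have hsub : Z.biUnion φ.missingColors ⊆ Z.biUnion fun v => {γ | φ.M γ x v = 1} := by
    intro γ hγ
    obtain ⟨v, hv, hγv⟩ := Finset.mem_biUnion.1 hγ
    obtain ⟨j, hj, rfl⟩ := hmemZ hv
    have hγx : ¬ φ.IsMissing γ x := fun h =>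
      hG.false (hF.nonempty_of_isMissing h0 hj h (mem_missingColors.1 hγv)).some
    obtain ⟨u, hu⟩ := exists_M_eq_one_of_not_isMissing hγx
    obtain ⟨i, hi0, hi, rfl⟩ := hmax γ u j hu hj (mem_missingColors.1 hγv)
    exact Finset.mem_biUnion.2 ⟨z i, Finset.mem_image_of_mem z (Finset.mem_range.2 (by omega)),
      by simp [hF.M_eq_one i hi0 hi]⟩
  calc #Z * k = ∑ v ∈ Z, (#(φ.missingColors v) + (G.eraseEdge x (z 0)).deg v) := by
        simp [card_missingColors_add_deg, mul_comm]
    _ = #(Z.biUnion φ.missingColors) + ∑ v ∈ Z, (G.eraseEdge x (z 0)).deg v := by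
        rw [Finset.sum_add_distrib, Finset.card_biUnion hdisj]
    _ ≤ ∑ v ∈ Z, (G.eraseEdge x (z 0)).mu x v + ∑ v ∈ Z, (G.eraseEdge x (z 0)).deg v := by
        gcongr
        refine (Finset.card_le_card hsub).trans (Finset.card_biUnion_le.trans ?_)
        simp [card_filter_M_eq_one]
    _ = _ := by rw [add_comm, Finset.sum_add_distrib]

end IsFan

/-- Vizing's fan argument: otherwise a maximal fan `Z ∋ w` at `x` would satisfy
`∑ z ∈ Z, (d(z) + μ(x,z)) ≥ |Z| k + 2`, by `IsFan.card_mul_le_sum` transferred to `G`. -/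
theorem nonempty_edgeColoring_of_eraseEdge {x w : V} (φ : (G.eraseEdge x w).EdgeColoring k)
    (hxw : 0 < G.mu x w) (hx : G.deg x ≤ k)
    (hle : ∀ z, 0 < G.mu x z → G.deg z + G.mu x z ≤ k + 1)
    (hsub : {z | 0 < G.mu x z ∧ k < G.deg z + G.mu x z}.Subsingleton) :
    Nonempty (G.EdgeColoring k) := by
  by_contra hG
  rw [not_nonempty_iff] at hG
  have : NeZero k := ⟨by have := G.mu_le_deg x w; omega⟩
  obtain ⟨z, c, n, rfl, hF, hmax⟩ := IsFan.exists_maximal φ x w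
  have hlower := hF.card_mul_le_sum hxw hx hG hmax
  set Z := (Finset.range (n + 1)).image z
  have hZ {v : V} (hv : v ∈ Z) : 0 < G.mu x v := by
    obtain ⟨j, hj, rfl⟩ : ∃ j ≤ n, z j = v := by simpa [Z, Nat.lt_succ_iff] using hv
    exact hF.pos_mu hxw hj
  have hw : z 0 ∈ Z := Finset.mem_image_of_mem z (by simp)
  have hxZ : x ∉ Z := fun h => G.ne_of_mu_pos (hZ h) rfl
  have hone : #{v ∈ Z | k < G.deg v + G.mu x v} ≤ 1 :=
    Finset.card_le_one.2 fun a ha b hb => by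
      simp only [Finset.mem_filter] at ha hb
      exact hsub ⟨hZ ha.1, ha.2⟩ ⟨hZ hb.1, hb.2⟩
  have hupper : ∑ v ∈ Z, (G.deg v + G.mu x v) ≤ #Z * k + 1 :=
    calc ∑ v ∈ Z, (G.deg v + G.mu x v)
        ≤ ∑ v ∈ Z, (k + if k < G.deg v + G.mu x v then 1 else 0) :=
          Finset.sum_le_sum fun v hv => by have := hle v (hZ hv); split <;> omega
      _ = #Z * k + #{v ∈ Z | k < G.deg v + G.mu x v} := by
          rw [Finset.sum_add_distrib, Finset.sum_const, smul_eq_mul, Finset.card_filter]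
      _ ≤ #Z * k + 1 := by omega
  have := sum_deg_add_mu_eraseEdge hxw hw hxZ
  omega

end Multigraph

namespace Multigraph

variable {V : Type*} [Fintype V] {G : Multigraph V} {D t : ℕ} {B : SimpleGraph V}

/-- The hypothesis of the theorem with a degree bound `D` in place of `Δ(G)`, so that it
survives edge deletion. -/
def CoreBound (G : Multigraph V) (D t : ℕ) (B : SimpleGraph V) : Prop :=
  ∀ u v, D + t < G.deg u + G.locMult u → D + t < G.deg v + G.locMult v →
    G.mu u v ≤ t + 1 ∧ (G.mu u v = t + 1 → B.Adj u v)

theorem CoreBound.mono {G' : Multigraph V} (hG : G.CoreBound D t B)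
    (hle : ∀ u v, G'.mu u v ≤ G.mu u v) : G'.CoreBound D t B := by
  intro u v hu hv
  have := deg_mono hle u
  have := deg_mono hle v
  have := locMult_mono hle u
  have := locMult_mono hle v
  have := hle u v
  obtain ⟨h1, h2⟩ := hG u v (by omega) (by omega)
  exact ⟨by omega, fun h => h2 (by omega)⟩

/-- Take for `x` a vertex with at most one `B`-neighbour among the non-isolated vertices with
`d + μ > D + t`, or any non-isolated vertex if there are none. -/
theorem CoreBound.exists_edge_forall_deg_add_mu_le (hG : G.CoreBound D t B) (hD : ∀ v, G.deg v ≤ D)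
    (hB : B.IsAcyclic) {a b : V} (hab : 0 < G.mu a b) :
    ∃ x w, 0 < G.mu x w ∧ (∀ z, 0 < G.mu x z → G.deg z + G.mu x z ≤ D + t + 1) ∧
      {z | 0 < G.mu x z ∧ D + t < G.deg z + G.mu x z}.Subsingleton := by
  let C : Set V := {v | D + t < G.deg v + G.locMult v ∧ ∃ u, 0 < G.mu v u}
  have hC {x z : V} (hz : 0 < G.mu x z ∧ D + t < G.deg z + G.mu x z) : z ∈ C := by
    have := G.mu_le_locMult z x
    rw [G.symm] at hz
    exact ⟨by omega, x, hz.1⟩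
  rcases C.eq_empty_or_nonempty with hCe | hCne
  · have hno {x z : V} (hz : 0 < G.mu x z ∧ D + t < G.deg z + G.mu x z) : False := by
      simpa [hCe] using hC hz
    refine ⟨a, b, hab, fun z hz => ?_, fun z hz => (hno hz).elim⟩
    by_contra h
    exact hno ⟨hz, by omega⟩
  · obtain ⟨x, ⟨hxcore, w, hxw⟩, hsub⟩ := hB.exists_mem_subsingleton_neighborSet_inter hCne
    have heavy {z : V} (hz : 0 < G.mu x z ∧ D + t < G.deg z + G.mu x z) :
        G.mu x z = t + 1 ∧ B.Adj x z := by
      obtain ⟨h1, h2⟩ := hG x z hxcore (hC hz).1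
      have := hD z
      have : G.mu x z = t + 1 := by omega
      exact ⟨this, h2 this⟩
    refine ⟨x, w, hxw, fun z hz => ?_, fun z₁ hz₁ z₂ hz₂ =>
      hsub ⟨(heavy hz₁).2, hC hz₁⟩ ⟨(heavy hz₂).2, hC hz₂⟩⟩
    by_cases h : D + t < G.deg z + G.mu x z
    · have := (heavy ⟨hz, h⟩).1
      have := hD z
      omega
    · omega

theorem CoreBound.nonempty_edgeColoring [DecidableEq V] (hG : G.CoreBound D t B)
    (hD : ∀ v, G.deg v ≤ D) (hB : B.IsAcyclic) : Nonempty (G.EdgeColoring (D + t)) := by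
  induction hsize : ∑ v, G.deg v using Nat.strong_induction_on generalizing G with
  | _ s ih =>
  by_cases hE : ∀ u v, G.mu u v = 0
  · exact ⟨.ofMuEqZero hE _⟩
  push Not at hE
  obtain ⟨a, b, hab⟩ := hE
  obtain ⟨x, w, hxw, hle, hsub⟩ :=
    hG.exists_edge_forall_deg_add_mu_le hD hB (Nat.pos_of_ne_zero hab)
  have hmono := deg_mono (G.mu_eraseEdge_le x w)
  have hlt : ∑ v, (G.eraseEdge x w).deg v < s := hsize ▸ Finset.sum_lt_sum
    (fun v _ => hmono v) ⟨x, Finset.mem_univ x, by have := deg_eraseEdge_add_one hxw; omega⟩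
  obtain ⟨φ⟩ := ih _ hlt (hG.mono (G.mu_eraseEdge_le x w)) (fun v => (hmono v).trans (hD v)) rfl
  exact nonempty_edgeColoring_of_eraseEdge φ hxw ((hD x).trans (Nat.le_add_right D t)) hle hsub

end Multigraph

/-- Theorem (forest core): if the t-core H of G has multiplicity at most t+1 and the
simple graph of its multiplicity-(t+1) edges is acyclic, then χ'(G) ≤ Δ(G) + t. -/
theorem stmt0 {V : Type*} [Fintype V] (G : Multigraph V) (t : ℕ)
    (H : Multigraph V) (hH : H = G.tCore t)
    (hmul : ∀ u v, H.mu u v ≤ t + 1)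
    (B : SimpleGraph V) (hB : ∀ u v, B.Adj u v ↔ H.mu u v = t + 1)
    (hacyc : B.IsAcyclic) :
    G.chromaticIndex ≤ G.maxDeg + t := by
  classical
  have hcore : G.CoreBound G.maxDeg t B := by
    intro u v hu hv
    have hHuv : H.mu u v = G.mu u v := by
      subst hH
      exact if_pos ⟨hu, hv⟩
    rw [← hHuv, hB]
    exact ⟨hmul u v, id⟩
  obtain ⟨φ⟩ := hcore.nonempty_edgeColoring G.deg_le_maxDeg hacyc
  exact φ.chromaticIndex_le
end

section
/- Let H be a loopless multigraph on a finite vertex set V and let t ≥ 0 be an integer with corefan(H) > t. Then there exist a finite vertex set W containing V and a loopless multigraph G on W such that {w ∈ W : d_G(w) + μ_G(w) > Δ(G) + t} = V, μ_G(u,v) = μ_H(u,v) for all u,v ∈ V (so the t-core of G is H), and Fan(G) > Δ(G) + t. -/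
namespace Multigraph

variable {V : Type*} [Fintype V]

/-- K is a subgraph of H (same vertex set, smaller multiplicities). -/
def IsSubgraph (K H : Multigraph V) : Prop := ∀ u v, K.mu u v ≤ H.mu u v

/-- K has at least one edge. -/
def HasEdge (K : Multigraph V) : Prop := ∃ u v, 1 ≤ K.mu u v

/-- The cfan degree cdeg_{H,K}(x,y): least l such that
∑_{z∈Z}(d_K(z) − d_H(z) + μ_K(x,z) − l) ≤ 1 for every Z ⊆ N_K(x) with y ∈ Z. -/
noncomputable def cdeg (H K : Multigraph V) (x y : V) : ℕ :=
  sInf { l : ℕ | ∀ Z : Finset V, (∀ z ∈ Z, 1 ≤ K.mu x z) → y ∈ Z →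
    ∑ z ∈ Z, ((K.deg z : ℤ) - (H.deg z : ℤ) + (K.mu x z : ℤ) - (l : ℤ)) ≤ 1 }

/-- The cfan number corefan(H): max over nonempty subgraphs K of H of the min of
cdeg_{H,K}(x,y) over edges xy of K (0 if H is edgeless). -/
noncomputable def corefan (H : Multigraph V) : ℕ :=
  sSup { n | ∃ K : Multigraph V, IsSubgraph K H ∧ HasEdge K ∧
    n = sInf { m | ∃ x y, 1 ≤ K.mu x y ∧ m = cdeg H K x y } }

end Multigraph

namespace Multigraph

variable {V : Type*} [Fintype V]

/-- The fan degree deg_J(x,y): least k satisfying condition (i) or (ii). -/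
noncomputable def fanDeg (J : Multigraph V) (x y : V) : ℕ :=
  sInf { k : ℕ | ((J.deg x : ℤ) + (J.deg y : ℤ) - (J.mu x y : ℤ) ≤ (k : ℤ)) ∨
    (∀ Z : Finset V, (∀ z ∈ Z, 1 ≤ J.mu x z) → y ∈ Z → 2 ≤ Z.card →
      ∑ z ∈ Z, ((J.deg z : ℤ) + (J.mu x z : ℤ) - (k : ℤ)) ≤ 1) }

/-- The fan number fan(G): max over nonempty subgraphs J of G of the min of
deg_J(x,y) over edges xy of J (0 if G is edgeless). -/
noncomputable def fanNum (G : Multigraph V) : ℕ :=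
  sSup { n | ∃ J : Multigraph V, IsSubgraph J G ∧ HasEdge J ∧
    n = sInf { m | ∃ x y, 1 ≤ J.mu x y ∧ m = fanDeg J x y } }

/-- Fan(G) = max(Δ(G), fan(G)). -/
noncomputable def bigFan (G : Multigraph V) : ℕ := max (maxDeg G) (fanNum G)

end Multigraph

namespace Multigraph

variable {V : Type*} [Fintype V]

lemma mu_le_deg_s3 (M : Multigraph V) (u w : V) : M.mu u w ≤ M.deg u :=
  Finset.single_le_sum (fun i _ => Nat.zero_le _) (Finset.mem_univ w)

lemma deg_le_maxDeg_s3 (M : Multigraph V) (v : V) : M.deg v ≤ M.maxDeg :=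
  Finset.le_sup (Finset.mem_univ v)

lemma deg_mono_s3 {J G : Multigraph V} (h : IsSubgraph J G) (v : V) : J.deg v ≤ G.deg v :=
  Finset.sum_le_sum fun u _ => h v u

lemma fanDeg_le_degs (J : Multigraph V) (x y : V) : fanDeg J x y ≤ J.deg x + J.deg y :=
  Nat.sInf_le (Or.inl (by push_cast; linarith [(Nat.cast_nonneg (J.mu x y) : (0:ℤ) ≤ J.mu x y)]))

lemma exists_edge_of_deg (M : Multigraph V) (u : V) (h : M.deg u ≠ 0) : ∃ w, 1 ≤ M.mu u w := by
  by_contra hc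
  push_neg at hc
  apply h
  exact Finset.sum_eq_zero fun w _ => by have := hc w; omega

lemma deg_ne_zero_of_mu {M : Multigraph V} {u w : V} (h : 1 ≤ M.mu u w) : M.deg u ≠ 0 := by
  have := M.mu_le_deg_s3 u w; omega

end Multigraph

namespace Stmt3Aux
open Multigraph

variable {V : Type} [Fintype V] [DecidableEq V]

section
variable (H : Multigraph V) (t : ℕ)

def Dl : ℕ := H.maxDeg
def L2 : ℕ := 3 * (t + Dl H) + 126
def LL : ℕ := 2 * L2 H t
def DD : ℕ := LL H t - t
def Pv (v : V) : ℕ := DD H t - H.deg v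
def dv (v : V) : ℕ := Pv H t v % 3
def av (v : V) : ℕ := (Pv H t v + 2 * dv H t v) / 3
def bv (v : V) : ℕ := L2 H t - av H t v
def Af (v : V) (i : Fin 3) : ℕ := if i = 2 then av H t v else av H t v - dv H t v
def Bf (v : V) (i j : Fin 3) : ℕ :=
  if i = j then 0 else if i = 2 ∨ j = 2 then bv H t v else bv H t v + 2 * dv H t v

lemma master (v : V) :
    3 * av H t v = Pv H t v + 2 * dv H t v ∧
    dv H t v = Pv H t v % 3 ∧
    Pv H t v + H.deg v = DD H t ∧
    H.deg v ≤ Dl H ∧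
    DD H t + t = LL H t ∧
    LL H t = 2 * L2 H t ∧
    L2 H t = 3 * (t + Dl H) + 126 ∧
    av H t v + bv H t v = L2 H t := by
  have hd : H.deg v ≤ Dl H := H.deg_le_maxDeg_s3 v
  refine ⟨?_, rfl, ?_, hd, ?_, rfl, rfl, ?_⟩ <;>
    · simp only [av, bv, dv, Pv, DD, LL, L2]
      omega

lemma Bf_symm (v : V) (i j : Fin 3) : Bf H t v i j = Bf H t v j i := by
  unfold Bf
  rcases eq_or_ne i j with rfl | hij
  · simp
  · rw [if_neg hij, if_neg (Ne.symm hij)]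
    exact if_congr or_comm rfl rfl

lemma Bf_le_Af (v : V) (i j : Fin 3) : Bf H t v i j ≤ Af H t v i := by
  have hm := master H t v
  unfold Bf Af
  split_ifs <;> omega

lemma Af_pos (v : V) (i : Fin 3) : 1 ≤ Af H t v i := by
  have hm := master H t v
  unfold Af
  split_ifs <;> omega

lemma Bf_pos (v : V) {i j : Fin 3} (h : i ≠ j) : 1 ≤ Bf H t v i j := by
  have hm := master H t v
  unfold Bf
  split_ifs <;> omega

def build (M : Multigraph V) (c : V → Prop) [DecidablePred c] :
    Multigraph (V ⊕ V × Fin 3) where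
  mu x y :=
    match x, y with
    | .inl u, .inl w => M.mu u w
    | .inl u, .inr (w, i) => if u = w ∧ c w then Af H t w i else 0
    | .inr (w, i), .inl u => if u = w ∧ c w then Af H t w i else 0
    | .inr (v, i), .inr (w, j) => if v = w ∧ c v then Bf H t v i j else 0
  symm := by
    rintro (u | ⟨p, i⟩) (w | ⟨q, j⟩)
    · exact M.symm u w
    · rfl
    · rfl
    · rcases eq_or_ne p q with rfl | hpq
      · simp [Bf_symm]
      · simp [hpq, hpq.symm]
  loopless := by
    rintro (u | ⟨p, i⟩)
    · exact M.loopless u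
    · simp [Bf]

variable (M : Multigraph V) (c : V → Prop) [DecidablePred c]

@[simp] lemma build_mu_inl_inl (u w : V) :
    (build H t M c).mu (Sum.inl u) (Sum.inl w) = M.mu u w := rfl

@[simp] lemma build_mu_inl_inr (u w : V) (i : Fin 3) :
    (build H t M c).mu (Sum.inl u) (Sum.inr (w, i)) = if u = w ∧ c w then Af H t w i else 0 := rfl

@[simp] lemma build_mu_inr_inl (u w : V) (i : Fin 3) :
    (build H t M c).mu (Sum.inr (w, i)) (Sum.inl u) = if u = w ∧ c w then Af H t w i else 0 := rfl

@[simp] lemma build_mu_inr_inr (p q : V) (i j : Fin 3) :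
    (build H t M c).mu (Sum.inr (p, i)) (Sum.inr (q, j)) = if p = q ∧ c p then Bf H t p i j else 0 := rfl

lemma deg_build_inl (v : V) :
    (build H t M c).deg (Sum.inl v) = M.deg v + if c v then Pv H t v else 0 := by
  have hm := master H t v
  show (∑ u : V ⊕ V × Fin 3, (build H t M c).mu (Sum.inl v) u) = _
  rw [Fintype.sum_sum_type]
  have h1 : ∀ w : V, (∑ i : Fin 3, (build H t M c).mu (Sum.inl v) (Sum.inr (w, i)))
      = if v = w then (if c w then Pv H t w else 0) else 0 := by
    intro w
    by_cases hw : v = w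
    · subst hw
      by_cases hc : c v
      · have hm2 := master H t v
        simp only [build_mu_inl_inr, hc, and_true, if_pos rfl, Fin.sum_univ_three, Af,
          show ((0 : Fin 3) = 2) = False by simp [Fin.ext_iff],
          show ((1 : Fin 3) = 2) = False by simp [Fin.ext_iff],
          if_false, if_true]
        omega
      · simp [hc]
    · simp [hw]
  have hB : (∑ p : V × Fin 3, (build H t M c).mu (Sum.inl v) (Sum.inr p))
      = if c v then Pv H t v else 0 := by
    rw [Fintype.sum_prod_type]
    simp only [h1]
    rw [Finset.sum_ite_eq]
    simp
  rw [hB]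
  simp only [build_mu_inl_inl]
  rfl

lemma deg_build_inr (v : V) (i : Fin 3) :
    (build H t M c).deg (Sum.inr (v, i)) = if c v then LL H t - Af H t v i else 0 := by
  have hm := master H t v
  show (∑ u : V ⊕ V × Fin 3, (build H t M c).mu (Sum.inr (v, i)) u) = _
  rw [Fintype.sum_sum_type]
  have h1 : (∑ u : V, (build H t M c).mu (Sum.inr (v, i)) (Sum.inl u))
      = if c v then Af H t v i else 0 := by
    have huv : ∀ u : V, (build H t M c).mu (Sum.inr (v, i)) (Sum.inl u)
        = if u = v then (if c v then Af H t v i else 0) else 0 := by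
      intro u
      by_cases hu : u = v
      · by_cases hc : c v <;> simp [hu, hc]
      · simp [hu]
    simp only [huv]
    rw [Finset.sum_ite_eq']
    simp
  have h2 : (∑ p : V × Fin 3, (build H t M c).mu (Sum.inr (v, i)) (Sum.inr p))
      = if c v then (2 * bv H t v + if i = 2 then 0 else 2 * dv H t v) else 0 := by
    rw [Fintype.sum_prod_type]
    have hrow : ∀ w : V, (∑ j : Fin 3, (build H t M c).mu (Sum.inr (v, i)) (Sum.inr (w, j)))
        = if v = w then (if c v then (2 * bv H t v + if i = 2 then 0 else 2 * dv H t v) else 0) else 0 := by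
      intro w
      by_cases hw : v = w
      · subst hw
        by_cases hc : c v
        · simp only [build_mu_inr_inr, hc, and_true, if_pos rfl, Fin.sum_univ_three]
          fin_cases i <;> simp [Bf, Fin.ext_iff] <;> omega
        · simp [hc]
      · simp [hw]
    simp only [hrow]
    rw [Finset.sum_ite_eq]
    simp
  rw [h1, h2]
  by_cases hc : c v
  · simp only [hc, if_true]
    unfold Af
    split_ifs <;> omega
  · simp [hc]

end
end Stmt3Aux

namespace Stmt3Aux
open Multigraph

variable {V : Type} [Fintype V] [DecidableEq V]

section
variable (H : Multigraph V) (t : ℕ)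

lemma fanDeg_ge {W : Type} [Fintype W] (J : Multigraph W) (N : ℕ) (x y : W)
    (hi : (N : ℤ) + 1 ≤ (J.deg x : ℤ) + (J.deg y : ℤ) - (J.mu x y : ℤ))
    (Z : Finset W) (hZ1 : ∀ z ∈ Z, 1 ≤ J.mu x z) (hZ2 : y ∈ Z) (hZ3 : 2 ≤ Z.card)
    (hZ4 : 2 ≤ ∑ z ∈ Z, ((J.deg z : ℤ) + (J.mu x z : ℤ) - (N : ℤ))) :
    N + 1 ≤ fanDeg J x y := by
  unfold fanDeg
  refine le_csInf ⟨J.deg x + J.deg y, Or.inl ?_⟩ ?_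
  · push_cast
    have : (0:ℤ) ≤ (J.mu x y : ℤ) := by positivity
    linarith
  rintro b (hb | hb)
  · by_contra hc
    push_neg at hc
    have h2 : (b:ℤ) < (N:ℤ) + 1 := by exact_mod_cast hc
    linarith
  · by_contra hc
    push_neg at hc
    have hbN : (b:ℤ) ≤ (N:ℤ) := by
      have h3 : b ≤ N := Nat.lt_succ_iff.mp hc
      exact_mod_cast h3
    have h5 := hb Z hZ1 hZ2 hZ3
    have h6 : (∑ z ∈ Z, ((J.deg z : ℤ) + (J.mu x z : ℤ) - (N:ℤ)))
        ≤ ∑ z ∈ Z, ((J.deg z : ℤ) + (J.mu x z : ℤ) - (b:ℤ)) :=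
      Finset.sum_le_sum fun z _ => by linarith
    linarith

variable (K : Multigraph V)

def Jb : Multigraph (V ⊕ V × Fin 3) := build H t K (fun v => K.deg v ≠ 0)
def Gb : Multigraph (V ⊕ V × Fin 3) := build H t H (fun _ => True)

lemma Gb_deg_inl (v : V) : (Gb H t).deg (Sum.inl v) = DD H t := by
  have hm := master H t v
  rw [Gb, deg_build_inl]
  simp only [if_true]
  omega

lemma Gb_deg_inr (v : V) (i : Fin 3) :
    (Gb H t).deg (Sum.inr (v, i)) = LL H t - Af H t v i := by
  rw [Gb, deg_build_inr]
  simp only [if_true]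

lemma Jb_deg_inl (v : V) (hv : K.deg v ≠ 0) :
    (Jb H t K).deg (Sum.inl v) = K.deg v + Pv H t v := by
  rw [Jb, deg_build_inl]
  simp only [ne_eq, hv, not_false_eq_true, if_true]

lemma Jb_deg_inr (v : V) (i : Fin 3) (hv : K.deg v ≠ 0) :
    (Jb H t K).deg (Sum.inr (v, i)) = LL H t - Af H t v i := by
  rw [Jb, deg_build_inr]
  simp only [ne_eq, hv, not_false_eq_true, if_true]

lemma Af_facts (v : V) (i : Fin 3) :
    t + 1 ≤ Af H t v i ∧ 2 * Af H t v i + t + Dl H + 1 ≤ DD H t ∧ Af H t v i ≤ LL H t := by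
  have hm := master H t v
  unfold Af
  split_ifs <;> omega

lemma key_ij (v : V) (i j : Fin 3) (hij : i ≠ j) :
    (Af H t v j : ℤ) + (t + Dl H + 2) ≤ (Af H t v i : ℤ) + (Bf H t v i j : ℤ) := by
  have hm := master H t v
  unfold Af Bf
  split_ifs <;> push_cast <;> omega

lemma key2 (v : V) (i j : Fin 3) :
    Af H t v i + Af H t v j + Bf H t v i j + 1 ≤ LL H t := by
  have hm := master H t v
  unfold Af Bf
  split_ifs <;> omega

lemma Jb_sub (hKH : IsSubgraph K H) : IsSubgraph (Jb H t K) (Gb H t) := by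
  rintro (u | ⟨p, i⟩) (w | ⟨q, j⟩) <;>
    simp only [Jb, Gb, build_mu_inl_inl, build_mu_inl_inr, build_mu_inr_inl, build_mu_inr_inr]
  · exact hKH u w
  · split_ifs with h1 h2 <;> simp_all
  · split_ifs with h1 h2 <;> simp_all
  · split_ifs with h1 h2 <;> simp_all

lemma Gb_locMult_inl (v : V) : t + 1 ≤ (Gb H t).locMult (Sum.inl v) := by
  have h1 : (Gb H t).mu (Sum.inl v) (Sum.inr (v, (2:Fin 3))) = Af H t v 2 := by
    simp [Gb]
  have h2 : (Gb H t).mu (Sum.inl v) (Sum.inr (v, (2:Fin 3))) ≤ (Gb H t).locMult (Sum.inl v) :=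
    Finset.le_sup (Finset.mem_univ _)
  have h3 := (Af_facts H t v 2).1
  omega

lemma Gb_locMult_inr (v : V) (i : Fin 3) :
    (Gb H t).locMult (Sum.inr (v, i)) ≤ Af H t v i := by
  apply Finset.sup_le
  rintro (u | ⟨w, j⟩) _
  · show (if u = v ∧ True then Af H t v i else 0) ≤ Af H t v i
    split_ifs <;> omega
  · show (if v = w ∧ True then Bf H t v i j else 0) ≤ Af H t v i
    split_ifs with h
    · exact Bf_le_Af H t v i j
    · omega

lemma Gb_maxDeg (x₀ : V) : (Gb H t).maxDeg = DD H t := by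
  apply le_antisymm
  · apply Finset.sup_le
    rintro (v | ⟨v, i⟩) _
    · rw [Gb_deg_inl]
    · rw [Gb_deg_inr]
      have h1 := Af_facts H t v i
      have hm := master H t v
      omega
  · rw [← Gb_deg_inl H t x₀]
    exact Finset.le_sup (Finset.mem_univ _)

end
end Stmt3Aux

namespace Stmt3Aux
open Multigraph

variable {V : Type} [Fintype V] [DecidableEq V]

section
variable (H : Multigraph V) (t : ℕ) (K : Multigraph V)

lemma bigZ (hKH : IsSubgraph K H) (u : V) (Z₀ : Finset V)
    (hZ1 : ∀ z ∈ Z₀, 1 ≤ K.mu u z)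
    (hZ3 : 1 < ∑ z ∈ Z₀, ((K.deg z : ℤ) - (H.deg z : ℤ) + (K.mu u z : ℤ) - (t : ℤ)))
    (hcu : K.deg u ≠ 0) :
    ∃ ZW : Finset (V ⊕ V × Fin 3),
      (∀ z ∈ ZW, 1 ≤ (Jb H t K).mu (Sum.inl u) z) ∧
      (∀ z ∈ Z₀, Sum.inl z ∈ ZW) ∧ (∀ i : Fin 3, Sum.inr (u, i) ∈ ZW) ∧ 2 ≤ ZW.card ∧
      2 ≤ ∑ z ∈ ZW, (((Jb H t K).deg z : ℤ) + ((Jb H t K).mu (Sum.inl u) z : ℤ) - (LL H t : ℤ)) := by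
  classical
  set T : Finset (V ⊕ V × Fin 3) :=
    {Sum.inr (u, (0:Fin 3)), Sum.inr (u, (1:Fin 3)), Sum.inr (u, (2:Fin 3))} with hT
  set ZW : Finset (V ⊕ V × Fin 3) := Z₀.map ⟨Sum.inl, Sum.inl_injective⟩ ∪ T with hZW
  have hdisj : Disjoint (Z₀.map ⟨Sum.inl, Sum.inl_injective⟩) T := by
    rw [Finset.disjoint_left]
    rintro a ha hb
    obtain ⟨z, _, rfl⟩ := Finset.mem_map.mp ha
    simp [hT] at hb
  have hmuJ : ∀ i : Fin 3, (Jb H t K).mu (Sum.inl u) (Sum.inr (u, i)) = Af H t u i := by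
    intro i
    show (if u = u ∧ K.deg u ≠ 0 then Af H t u i else 0) = Af H t u i
    simp [hcu]
  have hmemT : ∀ i : Fin 3, Sum.inr (u, i) ∈ T := by
    intro i
    fin_cases i <;> simp [hT]
  refine ⟨ZW, ?_, ?_, ?_, ?_, ?_⟩
  · rintro z hz
    rcases Finset.mem_union.mp hz with hz | hz
    · obtain ⟨z₀, hz₀, rfl⟩ := Finset.mem_map.mp hz
      exact hZ1 z₀ hz₀
    · have : ∃ i : Fin 3, z = Sum.inr (u, i) := by
        simp only [hT, Finset.mem_insert, Finset.mem_singleton] at hz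
        rcases hz with rfl | rfl | rfl
        exacts [⟨0, rfl⟩, ⟨1, rfl⟩, ⟨2, rfl⟩]
      obtain ⟨i, rfl⟩ := this
      rw [hmuJ i]
      exact Af_pos H t u i
  · intro z hz
    exact Finset.mem_union_left _ (Finset.mem_map_of_mem _ hz)
  · intro i
    exact Finset.mem_union_right _ (hmemT i)
  · have h0 := Finset.mem_union_right (Z₀.map ⟨Sum.inl, Sum.inl_injective⟩) (hmemT 0)
    have h1 := Finset.mem_union_right (Z₀.map ⟨Sum.inl, Sum.inl_injective⟩) (hmemT 1)
    refine Finset.one_lt_card.mpr ⟨_, h0, _, h1, ?_⟩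
    simp
  · rw [hZW, Finset.sum_union hdisj, Finset.sum_map]
    simp only [Function.Embedding.coeFn_mk]
    have hTsum : ∑ z ∈ T, (((Jb H t K).deg z : ℤ) + ((Jb H t K).mu (Sum.inl u) z : ℤ) - (LL H t : ℤ)) = 0 := by
      have hterm : ∀ i : Fin 3,
          ((Jb H t K).deg (Sum.inr (u, i)) : ℤ) + ((Jb H t K).mu (Sum.inl u) (Sum.inr (u, i)) : ℤ) - (LL H t : ℤ) = 0 := by
        intro i
        rw [hmuJ i, Jb_deg_inr H t K u i hcu]
        have := (Af_facts H t u i).2.2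
        omega
      rw [hT]
      rw [Finset.sum_insert (by simp), Finset.sum_insert (by simp), Finset.sum_singleton]
      rw [hterm 0, hterm 1, hterm 2]
      ring
    rw [hTsum, add_zero]
    have hcongr : ∀ z ∈ Z₀,
        (((Jb H t K).deg (Sum.inl z) : ℤ) + ((Jb H t K).mu (Sum.inl u) (Sum.inl z) : ℤ) - (LL H t : ℤ))
        = ((K.deg z : ℤ) - (H.deg z : ℤ) + (K.mu u z : ℤ) - (t : ℤ)) := by
      intro z hz
      have hz1 : K.deg z ≠ 0 := by
        have h1 := hZ1 z hz
        have h2 := K.mu_le_deg_s3 z u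
        rw [K.symm z u] at h2
        omega
      rw [Jb_deg_inl H t K z hz1]
      show ((K.deg z + Pv H t z : ℕ) : ℤ) + ((K.mu u z : ℕ) : ℤ) - (LL H t : ℤ) = _
      have hm := master H t z
      push_cast
      omega
    rw [Finset.sum_congr rfl hcongr]
    omega

lemma Jb_pairs (hKH : IsSubgraph K H)
    (hwit : ∀ x y, 1 ≤ K.mu x y → ∃ Z : Finset V, (∀ z ∈ Z, 1 ≤ K.mu x z) ∧ y ∈ Z ∧
      1 < ∑ z ∈ Z, ((K.deg z : ℤ) - (H.deg z : ℤ) + (K.mu x z : ℤ) - (t : ℤ))) :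
    ∀ x y, 1 ≤ (Jb H t K).mu x y → LL H t + 1 ≤ fanDeg (Jb H t K) x y := by
  have hmuV : ∀ u w : V, (Jb H t K).mu (Sum.inl u) (Sum.inl w) = K.mu u w := fun _ _ => rfl
  rintro (u | ⟨p, i⟩) (w | ⟨q, j⟩) hmu
  · -- case inl-inl
    have hmu' : 1 ≤ K.mu u w := hmu
    obtain ⟨Z₀, hZ1, hZ2, hZ3⟩ := hwit u w hmu'
    have hcu : K.deg u ≠ 0 := K.deg_ne_zero_of_mu hmu'
    have hcw : K.deg w ≠ 0 := by
      have h2 := K.mu_le_deg_s3 w u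
      rw [K.symm w u] at h2
      omega
    obtain ⟨ZW, m1, m2, m3, m4, m5⟩ := bigZ H t K hKH u Z₀ hZ1 hZ3 hcu
    refine fanDeg_ge _ _ _ _ ?_ ZW m1 (m2 w hZ2) m4 m5
    rw [Jb_deg_inl H t K u hcu, Jb_deg_inl H t K w hcw, hmuV u w]
    have hm1 := master H t u
    have hm2 := master H t w
    have h3 := hKH u w
    have h4 := H.mu_le_deg_s3 u w
    push_cast
    omega
  · -- case inl-inr
    have hmu' : 1 ≤ (if u = q ∧ K.deg q ≠ 0 then Af H t q j else 0) := hmu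
    by_cases hc : u = q ∧ K.deg q ≠ 0
    swap
    · rw [if_neg hc] at hmu'; omega
    obtain ⟨rfl, hcu⟩ := hc
    obtain ⟨y₀, hy₀⟩ := K.exists_edge_of_deg u hcu
    obtain ⟨Z₀, hZ1, hZ2, hZ3⟩ := hwit u y₀ hy₀
    obtain ⟨ZW, m1, m2, m3, m4, m5⟩ := bigZ H t K hKH u Z₀ hZ1 hZ3 hcu
    refine fanDeg_ge _ _ _ _ ?_ ZW m1 (m3 j) m4 m5
    have hmuu : (Jb H t K).mu (Sum.inl u) (Sum.inr (u, j)) = Af H t u j := by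
      show (if u = u ∧ K.deg u ≠ 0 then Af H t u j else 0) = _
      simp [hcu]
    rw [Jb_deg_inl H t K u hcu, Jb_deg_inr H t K u j hcu, hmuu]
    have hm1 := master H t u
    have hAf := Af_facts H t u j
    omega
  · -- case inr-inl
    have hmu' : 1 ≤ (if w = p ∧ K.deg p ≠ 0 then Af H t p i else 0) := hmu
    by_cases hc : w = p ∧ K.deg p ≠ 0
    swap
    · rw [if_neg hc] at hmu'; omega
    obtain ⟨rfl, hcp⟩ := hc
    rw [if_pos ⟨rfl, hcp⟩] at hmu'
    set j₀ : Fin 3 := if i = 0 then 1 else 0 with hj₀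
    have hij : i ≠ j₀ := by
      rw [hj₀]
      split_ifs with h
      · subst h; decide
      · exact h
    have hmuil : (Jb H t K).mu (Sum.inr (w, i)) (Sum.inl w) = Af H t w i := by
      show (if w = w ∧ K.deg w ≠ 0 then Af H t w i else 0) = _
      simp [hcp]
    have hmuij : (Jb H t K).mu (Sum.inr (w, i)) (Sum.inr (w, j₀)) = Bf H t w i j₀ := by
      show (if w = w ∧ K.deg w ≠ 0 then Bf H t w i j₀ else 0) = _
      simp [hcp]
    have hne : (Sum.inl w : V ⊕ V × Fin 3) ≠ Sum.inr (w, j₀) := by simp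
    refine fanDeg_ge _ _ _ _ ?_ {Sum.inl w, Sum.inr (w, j₀)} ?_ (Finset.mem_insert_self _ _)
      (by rw [Finset.card_pair hne]) ?_
    · rw [Jb_deg_inr H t K w i hcp, Jb_deg_inl H t K w hcp, hmuil]
      have hm1 := master H t w
      have hAf := Af_facts H t w i
      omega
    · rintro z hz
      rcases Finset.mem_insert.mp hz with rfl | hz
      · rw [hmuil]; exact Af_pos H t w i
      · rw [Finset.mem_singleton.mp hz, hmuij]
        exact Bf_pos H t w hij
    · rw [Finset.sum_pair hne, hmuil, hmuij,
        Jb_deg_inl H t K w hcp, Jb_deg_inr H t K w j₀ hcp]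
      have hm1 := master H t w
      have hkey := key_ij H t w i j₀ hij
      have hKd : 1 ≤ K.deg w := Nat.one_le_iff_ne_zero.mpr hcp
      have hAfj := Af_facts H t w j₀
      push_cast
      omega
  · -- case inr-inr
    have hmu' : 1 ≤ (if p = q ∧ K.deg p ≠ 0 then Bf H t p i j else 0) := hmu
    by_cases hc : p = q ∧ K.deg p ≠ 0
    swap
    · rw [if_neg hc] at hmu'; omega
    obtain ⟨rfl, hcp⟩ := hc
    rw [if_pos ⟨rfl, hcp⟩] at hmu'
    have hij : i ≠ j := by
      rintro rfl
      simp [Bf] at hmu'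
    have hmuil : (Jb H t K).mu (Sum.inr (p, i)) (Sum.inl p) = Af H t p i := by
      show (if p = p ∧ K.deg p ≠ 0 then Af H t p i else 0) = _
      simp [hcp]
    have hmuij : (Jb H t K).mu (Sum.inr (p, i)) (Sum.inr (p, j)) = Bf H t p i j := by
      show (if p = p ∧ K.deg p ≠ 0 then Bf H t p i j else 0) = _
      simp [hcp]
    have hne : (Sum.inl p : V ⊕ V × Fin 3) ≠ Sum.inr (p, j) := by simp
    refine fanDeg_ge _ _ _ _ ?_ {Sum.inl p, Sum.inr (p, j)} ?_
      (Finset.mem_insert_of_mem (Finset.mem_singleton_self _))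
      (by rw [Finset.card_pair hne]) ?_
    · rw [Jb_deg_inr H t K p i hcp, Jb_deg_inr H t K p j hcp, hmuij]
      have hm1 := master H t p
      have hAfi := Af_facts H t p i
      have hAfj := Af_facts H t p j
      have hk2 := key2 H t p i j
      omega
    · rintro z hz
      rcases Finset.mem_insert.mp hz with rfl | hz
      · rw [hmuil]; exact Af_pos H t p i
      · rw [Finset.mem_singleton.mp hz, hmuij]
        exact hmu'
    · rw [Finset.sum_pair hne, hmuil, hmuij,
        Jb_deg_inl H t K p hcp, Jb_deg_inr H t K p j hcp]
      have hm1 := master H t p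
      have hkey := key_ij H t p i j hij
      have hKd : 1 ≤ K.deg p := Nat.one_le_iff_ne_zero.mpr hcp
      have hAfj := Af_facts H t p j
      push_cast
      omega

lemma fanNum_ge (hKH : IsSubgraph K H) (hedge : HasEdge K)
    (hwit : ∀ x y, 1 ≤ K.mu x y → ∃ Z : Finset V, (∀ z ∈ Z, 1 ≤ K.mu x z) ∧ y ∈ Z ∧
      1 < ∑ z ∈ Z, ((K.deg z : ℤ) - (H.deg z : ℤ) + (K.mu x z : ℤ) - (t : ℤ))) :
    LL H t + 1 ≤ fanNum (Gb H t) := by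
  obtain ⟨x₀, y₀, he⟩ := hedge
  have hJedge : 1 ≤ (Jb H t K).mu (Sum.inl x₀) (Sum.inl y₀) := he
  have hmem : (sInf {m | ∃ x y, 1 ≤ (Jb H t K).mu x y ∧ m = fanDeg (Jb H t K) x y}) ∈
      {n | ∃ J, IsSubgraph J (Gb H t) ∧ HasEdge J ∧
        n = sInf {m | ∃ x y, 1 ≤ J.mu x y ∧ m = fanDeg J x y}} :=
    ⟨Jb H t K, Jb_sub H t K hKH, ⟨_, _, hJedge⟩, rfl⟩
  have hb : BddAbove {n | ∃ J, IsSubgraph J (Gb H t) ∧ HasEdge J ∧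
      n = sInf {m | ∃ x y, 1 ≤ J.mu x y ∧ m = fanDeg J x y}} := by
    refine ⟨2 * (Gb H t).maxDeg, ?_⟩
    rintro n ⟨J', hsub, ⟨x, y, hxy⟩, rfl⟩
    have h1 : sInf {m | ∃ x y, 1 ≤ J'.mu x y ∧ m = fanDeg J' x y} ≤ fanDeg J' x y :=
      Nat.sInf_le ⟨x, y, hxy, rfl⟩
    have h2 := fanDeg_le_degs J' x y
    have h3 := deg_mono_s3 hsub x
    have h4 := deg_mono_s3 hsub y
    have h5 := (Gb H t).deg_le_maxDeg_s3 x
    have h6 := (Gb H t).deg_le_maxDeg_s3 y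
    omega
  have hlow : LL H t + 1 ≤ sInf {m | ∃ x y, 1 ≤ (Jb H t K).mu x y ∧ m = fanDeg (Jb H t K) x y} := by
    refine le_csInf ⟨fanDeg (Jb H t K) (Sum.inl x₀) (Sum.inl y₀), Sum.inl x₀, Sum.inl y₀, hJedge, rfl⟩ ?_
    rintro m ⟨x, y, hxy, rfl⟩
    exact Jb_pairs H t K hKH hwit x y hxy
  calc LL H t + 1 ≤ _ := hlow
    _ ≤ fanNum (Gb H t) := le_csSup hb hmem

end
end Stmt3Aux


open Multigraph in
lemma stmt3_extract {V : Type} [Fintype V] (H : Multigraph V) (t : ℕ) (h : t < H.corefan) :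
    ∃ K : Multigraph V, IsSubgraph K H ∧ HasEdge K ∧
      ∀ x y, 1 ≤ K.mu x y → ∃ Z : Finset V, (∀ z ∈ Z, 1 ≤ K.mu x z) ∧ y ∈ Z ∧
        1 < ∑ z ∈ Z, ((K.deg z : ℤ) - (H.deg z : ℤ) + (K.mu x z : ℤ) - (t : ℤ)) := by
  unfold corefan at h
  set S := {n | ∃ K : Multigraph V, IsSubgraph K H ∧ HasEdge K ∧
    n = sInf {m | ∃ x y, 1 ≤ K.mu x y ∧ m = cdeg H K x y}} with hS
  have hbdd : BddAbove S := by
    by_contra hb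
    rw [csSup_of_not_bddAbove hb, csSup_empty] at h
    exact absurd h (by simp)
  have hne : S.Nonempty := by
    by_contra hn
    rw [Set.not_nonempty_iff_eq_empty] at hn
    rw [hn, csSup_empty] at h
    exact absurd h (by simp)
  obtain ⟨K, hKH, hKe, hval⟩ := Nat.sSup_mem hne hbdd
  refine ⟨K, hKH, hKe, ?_⟩
  intro x y hxy
  have h1 : sInf {m | ∃ x y, 1 ≤ K.mu x y ∧ m = cdeg H K x y} ≤ cdeg H K x y :=
    Nat.sInf_le ⟨x, y, hxy, rfl⟩
  have h2 : t < cdeg H K x y := by omega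
  have h3 : t ∉ {l : ℕ | ∀ Z : Finset V, (∀ z ∈ Z, 1 ≤ K.mu x z) → y ∈ Z →
      ∑ z ∈ Z, ((K.deg z : ℤ) - (H.deg z : ℤ) + (K.mu x z : ℤ) - (l : ℤ)) ≤ 1} := by
    intro hmem
    have h4 := Nat.sInf_le hmem
    unfold cdeg at h2
    omega
  simp only [Set.mem_setOf_eq] at h3
  push_neg at h3
  obtain ⟨Z, hZ1, hZ2, hZ3⟩ := h3
  exact ⟨Z, hZ1, hZ2, hZ3⟩


/-- Theorem: if corefan(H) > t, then there is a graph G (on a larger vertex set) whose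
t-core is H and with Fan(G) > Δ(G) + t. -/
theorem stmt3 {V : Type} [Fintype V] (H : Multigraph V) (t : ℕ)
    (h : t < H.corefan) :
    ∃ (W : Type) (_ : Fintype W) (f : V ↪ W) (G : Multigraph W),
      (∀ w : W, (G.maxDeg + t < G.deg w + G.locMult w) ↔ w ∈ Set.range f) ∧
      (∀ u v : V, G.mu (f u) (f v) = H.mu u v) ∧
      G.maxDeg + t < G.bigFan := by
  letI : DecidableEq V := Classical.decEq V
  obtain ⟨K, hKH, hKe, hwit⟩ := stmt3_extract H t h
  obtain ⟨x₀, y₀, he⟩ := hKe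
  have hmax := Stmt3Aux.Gb_maxDeg H t x₀
  refine ⟨V ⊕ V × Fin 3, inferInstance, ⟨Sum.inl, Sum.inl_injective⟩, Stmt3Aux.Gb H t, ?_, ?_, ?_⟩
  · rintro (v | ⟨v, i⟩)
    · constructor
      · intro _
        exact ⟨v, rfl⟩
      · intro _
        have h1 := Stmt3Aux.Gb_locMult_inl H t v
        rw [hmax, Stmt3Aux.Gb_deg_inl H t v]
        omega
    · constructor
      · intro hlt
        exfalso
        have h1 := Stmt3Aux.Gb_locMult_inr H t v i
        rw [hmax, Stmt3Aux.Gb_deg_inr H t v i] at hlt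
        have hm := Stmt3Aux.master H t v
        have hAf := Stmt3Aux.Af_facts H t v i
        omega
      · rintro ⟨v', hv'⟩
        exact absurd hv' (by simp)
  · intro u v
    rfl
  · have h1 := Stmt3Aux.fanNum_ge H t K hKH ⟨x₀, y₀, he⟩ hwit
    have hm := Stmt3Aux.master H t x₀
    have h2 : Multigraph.fanNum (Stmt3Aux.Gb H t) ≤ (Stmt3Aux.Gb H t).bigFan :=
      le_max_right _ _
    rw [hmax]
    omega
end

section
/- Let G be a loopless multigraph on a finite vertex set V, let t ≥ 0 be an integer, and let H be the t-core of G. If μ_H(u,v) ≤ t+1 for all u,v ∈ V, and the simple graph B on V in which u and v are adjacent exactly when μ_H(u,v) = t+1 admits a full B-queue, then corefan(H) ≤ t. -/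
/-- A full B-queue for a finite simple graph B: distinct vertices u_1, …, u_q and
sets S_0 = ∅, S_1, …, S_q = V(B) with S_i = N(u_i) ∪ {u_i} ∪ S_{i−1},
1 ≤ |S_i \ S_{i−1}| ≤ 2 and |S_i \ (S_{i−1} ∪ {u_i})| ≤ 1 for each i. -/
def HasFullBQueue {V : Type*} [Fintype V] (B : SimpleGraph V) : Prop :=
  ∃ (q : ℕ) (u : ℕ → V) (S : ℕ → Set V),
    (∀ i j, i < q → j < q → u i = u j → i = j) ∧
    S 0 = ∅ ∧
    (∀ i < q, S (i + 1) = B.neighborSet (u i) ∪ {u i} ∪ S i) ∧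
    (∀ i < q, 1 ≤ (S (i + 1) \ S i).ncard ∧ (S (i + 1) \ S i).ncard ≤ 2) ∧
    (∀ i < q, (S (i + 1) \ (S i ∪ {u i})).ncard ≤ 1) ∧
    S q = Set.univ

/-!
Call a vertex `z` saturated in `K ⊆ H` when `d_K(z) = d_H(z)`. In the cfan sum of an edge `xy`
every term `z` is at most `1`, and it can be positive only when `z` is saturated and
`μ_K(x,z) = t + 1`; so `cdeg(x,y) ≤ t` as soon as `y` is the only such `z`. If no edge of `K` had
this property, every vertex incident to `K` would have two distinct `B`-neighbours among the
saturated vertices `F` incident to `K`, and so would every `B`-neighbour of `F`, since `B`-edges at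
a saturated vertex lie in `K`. Walking along the queue, the first step reaching `F` would then add
two vertices other than `u_i`, which a queue forbids; hence `F = ∅`, contradicting that `K` has an
edge.
-/

namespace HasFullBQueue

variable {V : Type*} {B : SimpleGraph V} {F : Set V}

lemma disjoint_of_step [Finite V]
    (hF : ∀ v, (v ∈ F ∨ ∃ f ∈ F, B.Adj v f) → 1 < (B.neighborSet v ∩ F).ncard)
    {u : V} {S S' : Set V} (hS' : S' = B.neighborSet u ∪ {u} ∪ S)
    (hcard : (S' \ (S ∪ {u})).ncard ≤ 1) (hS : Disjoint S F) : Disjoint S' F := by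
  rw [Set.disjoint_left]
  intro f hfS' hfF
  have hu : u ∈ F ∨ ∃ f ∈ F, B.Adj u f := by
    rcases hS' ▸ hfS' with (hadj | rfl) | hfS
    · exact Or.inr ⟨f, hfF, hadj⟩
    · exact Or.inl hfF
    · exact absurd hfF (Set.disjoint_left.1 hS hfS)
  have hsub : B.neighborSet u ∩ F ⊆ S' \ (S ∪ {u}) := by
    rintro z ⟨hadj, hzF⟩
    refine ⟨hS' ▸ Or.inl (Or.inl hadj), ?_⟩
    rintro (hzS | rfl)
    · exact Set.disjoint_left.1 hS hzS hzF
    · exact hadj.ne rfl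
  have := Set.ncard_le_ncard hsub
  have := hF u hu
  omega

lemma eq_empty_of_one_lt_ncard_neighborSet_inter [Fintype V] (hq : HasFullBQueue B)
    (hF : ∀ v, (v ∈ F ∨ ∃ f ∈ F, B.Adj v f) → 1 < (B.neighborSet v ∩ F).ncard) :
    F = ∅ := by
  obtain ⟨q, u, S, -, hS0, hstep, -, hcard, hSq⟩ := hq
  have hdisj : ∀ i ≤ q, Disjoint (S i) F := by
    intro i
    induction i with
    | zero => exact fun _ => hS0 ▸ Set.empty_disjoint F
    | succ i ih => exact fun hi =>
        disjoint_of_step hF (hstep i (by omega)) (hcard i (by omega)) (ih (by omega))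
  simpa [hSq] using hdisj q le_rfl

end HasFullBQueue

namespace Multigraph

variable {V : Type*} [Fintype V] {K H : Multigraph V}

lemma deg_le_deg_of_isSubgraph (hK : K.IsSubgraph H) (z : V) : K.deg z ≤ H.deg z :=
  Finset.sum_le_sum fun u _ => hK z u

lemma mu_eq_of_deg_eq (hK : K.IsSubgraph H) {z : V} (hz : K.deg z = H.deg z) (u : V) :
    K.mu z u = H.mu z u :=
  (Finset.sum_eq_sum_iff_of_le fun i _ => hK z i).1 hz u (Finset.mem_univ u)

lemma cdeg_le_of_forall_saturated_eq (hK : K.IsSubgraph H) {t : ℕ}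
    (hmul : ∀ u v, H.mu u v ≤ t + 1) {x y : V}
    (hy : ∀ z, K.deg z = H.deg z → K.mu x z = t + 1 → z = y) :
    cdeg H K x y ≤ t := by
  classical
  apply Nat.sInf_le
  intro Z _ hyZ
  set g : V → ℤ := fun z => (K.deg z : ℤ) - H.deg z + K.mu x z - t
  have hmu : ∀ z, (K.mu x z : ℤ) ≤ t + 1 := fun z => by
    exact_mod_cast (hK x z).trans (hmul x z)
  have hdeg : ∀ z, (K.deg z : ℤ) ≤ H.deg z := fun z => by
    exact_mod_cast deg_le_deg_of_isSubgraph hK z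
  have hgy : g y ≤ 1 := by linarith [hmu y, hdeg y]
  have hg : ∀ z ∈ Z.erase y, g z ≤ 0 := by
    intro z hz
    by_cases hsat : K.deg z = H.deg z
    · have : K.mu x z ≠ t + 1 := fun h => (Finset.mem_erase.1 hz).1 (hy z hsat h)
      have : (K.mu x z : ℤ) ≤ t := by have := hmu z; omega
      simp only [g, hsat]
      linarith
    · have : (K.deg z : ℤ) < H.deg z := lt_of_le_of_ne (hdeg z) (by exact_mod_cast hsat)
      linarith [hmu z]
  calc ∑ z ∈ Z, g z = g y + ∑ z ∈ Z.erase y, g z := (Finset.add_sum_erase Z g hyZ).symm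
    _ ≤ 1 + 0 := add_le_add hgy (Finset.sum_nonpos hg)
    _ = 1 := add_zero 1

lemma exists_edge_forall_saturated_eq (hK : K.IsSubgraph H) (hE : K.HasEdge) {t : ℕ}
    (hmul : ∀ u v, H.mu u v ≤ t + 1) {B : SimpleGraph V}
    (hB : ∀ u v, B.Adj u v ↔ H.mu u v = t + 1) (hq : HasFullBQueue B) :
    ∃ x y, 1 ≤ K.mu x y ∧ ∀ z, K.deg z = H.deg z → K.mu x z = t + 1 → z = y := by
  by_contra! hcon
  set F : Set V := {z | K.deg z = H.deg z ∧ ∃ w, 1 ≤ K.mu z w}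
  have hF_of_mu : ∀ x z, K.deg z = H.deg z → K.mu x z = t + 1 → z ∈ F :=
    fun x z hsat hxz => ⟨hsat, x, by rw [K.symm]; omega⟩
  have htwo : ∀ v w, 1 ≤ K.mu v w → 1 < (B.neighborSet v ∩ F).ncard := by
    intro v w hvw
    obtain ⟨z₁, hz₁, hvz₁, -⟩ := hcon v w hvw
    obtain ⟨z₂, hz₂, hvz₂, hne⟩ := hcon v z₁ (by omega)
    have hadj : ∀ z, K.mu v z = t + 1 → B.Adj v z := fun z h => by
      rw [hB]; have := hK v z; have := hmul v z; omega
    exact (Set.one_lt_ncard (Set.toFinite _)).2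
      ⟨z₂, ⟨hadj z₂ hvz₂, hF_of_mu v z₂ hz₂ hvz₂⟩,
        z₁, ⟨hadj z₁ hvz₁, hF_of_mu v z₁ hz₁ hvz₁⟩, hne⟩
  have hFempty : F = ∅ := by
    refine hq.eq_empty_of_one_lt_ncard_neighborSet_inter fun v hv => ?_
    rcases hv with ⟨-, w, hw⟩ | ⟨f, ⟨hsat, -⟩, hadj⟩
    · exact htwo v w hw
    · refine htwo v f ?_
      rw [K.symm, mu_eq_of_deg_eq hK hsat, H.symm, (hB v f).1 hadj]
      omega
  obtain ⟨x, y, hxy⟩ := hE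
  obtain ⟨z, hsat, hxz, -⟩ := hcon x y hxy
  exact (hFempty ▸ hF_of_mu x z hsat hxz : z ∈ (∅ : Set V))

end Multigraph

theorem stmt4_general {V : Type*} [Fintype V] (t : ℕ)
    (H : Multigraph V)
    (hmul : ∀ u v, H.mu u v ≤ t + 1)
    (B : SimpleGraph V) (hB : ∀ u v, B.Adj u v ↔ H.mu u v = t + 1)
    (hq : HasFullBQueue B) :
    H.corefan ≤ t := by
  refine csSup_le' ?_
  rintro _ ⟨K, hK, hE, rfl⟩
  obtain ⟨x, y, hxy, hy⟩ := Multigraph.exists_edge_forall_saturated_eq hK hE hmul hB hq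
  calc sInf {m | ∃ x y, 1 ≤ K.mu x y ∧ m = H.cdeg K x y}
      ≤ H.cdeg K x y := Nat.sInf_le ⟨x, y, hxy, rfl⟩
    _ ≤ t := Multigraph.cdeg_le_of_forall_saturated_eq hK hmul hy

/-- Theorem: if the t-core H of G has multiplicity at most t+1 and the simple graph B of
its multiplicity-(t+1) edges has a full B-queue, then corefan(H) ≤ t. -/
theorem stmt4 {V : Type*} [Fintype V] (G : Multigraph V) (t : ℕ)
    (H : Multigraph V) (hH : H = G.tCore t)
    (hmul : ∀ u v, H.mu u v ≤ t + 1)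
    (B : SimpleGraph V) (hB : ∀ u v, B.Adj u v ↔ H.mu u v = t + 1)
    (hq : HasFullBQueue B) :
    H.corefan ≤ t :=
  stmt4_general t H hmul B hB hq
end

section
/- Let H be a loopless multigraph on a finite vertex set with at least one edge. Then corefan(H) = max over all nonempty full-multiplicity subgraphs K of H of min{cdeg_{H,K}(x,y) : μ_K(x,y) ≥ 1}. -/
namespace Multigraph

variable {V : Type*} [Fintype V]

/-- K is a full-multiplicity subgraph of H: each edge kept keeps all its copies. -/
def FullMult (K H : Multigraph V) : Prop := ∀ u v, K.mu u v = 0 ∨ K.mu u v = H.mu u v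

end Multigraph

/-!
Given a subgraph `K` of `H`, let `K̂` keep every edge of `K` with its full multiplicity in `H`.
Then `K̂` has the same edges as `K`, and every cfan degree can only grow from `K` to `K̂`,
because the sums defining it are monotone in `d_K` and `μ_K`. Hence the minimum over the edges
of `K̂` dominates the one over the edges of `K`. All these minima are bounded by `Δ(H)`, as
`cdeg_{H,K}(x,y) ≤ d_H(x)`.
-/

namespace Multigraph

section Saturation

variable {V : Type*}

def saturation (K H : Multigraph V) : Multigraph V where
  mu u v := if K.mu u v = 0 then 0 else H.mu u v
  symm u v := by rw [K.symm u v, H.symm u v]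
  loopless v := by simp [K.loopless]

variable {K H : Multigraph V}

theorem saturation_isSubgraph [Fintype V] : IsSubgraph (saturation K H) H := by
  intro u v
  by_cases h : K.mu u v = 0 <;> simp [saturation, h]

theorem isSubgraph_saturation [Fintype V] (hK : IsSubgraph K H) :
    IsSubgraph K (saturation K H) := by
  intro u v
  by_cases h : K.mu u v = 0 <;> simp [saturation, h, hK u v]

theorem saturation_fullMult [Fintype V] : FullMult (saturation K H) H := by
  intro u v
  by_cases h : K.mu u v = 0 <;> simp [saturation, h]

theorem one_le_mu_of_one_le_saturation_mu {u v : V} (h : 1 ≤ (saturation K H).mu u v) :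
    1 ≤ K.mu u v := by
  simp only [saturation] at h
  split_ifs at h <;> omega

end Saturation

variable {V : Type*} [Fintype V] {H K K' : Multigraph V}

theorem deg_le_deg (hK : IsSubgraph K H) (z : V) : K.deg z ≤ H.deg z :=
  Finset.sum_le_sum fun u _ => hK z u

theorem mu_le_deg_s6 (x u : V) : H.mu x u ≤ H.deg x :=
  Finset.single_le_sum (fun _ _ => Nat.zero_le _) (Finset.mem_univ u)

theorem deg_le_maxDeg_s6 (x : V) : H.deg x ≤ H.maxDeg :=
  Finset.le_sup (Finset.mem_univ x)

def IsCfanBound (H K : Multigraph V) (x y : V) (l : ℕ) : Prop :=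
  ∀ Z : Finset V, (∀ z ∈ Z, 1 ≤ K.mu x z) → y ∈ Z →
    ∑ z ∈ Z, ((K.deg z : ℤ) - (H.deg z : ℤ) + (K.mu x z : ℤ) - (l : ℤ)) ≤ 1

theorem cdeg_eq_sInf (x y : V) : cdeg H K x y = sInf {l | IsCfanBound H K x y l} := rfl

theorem isCfanBound_deg (hK : IsSubgraph K H) (x y : V) : IsCfanBound H K x y (H.deg x) := by
  refine fun Z _ _ => (Finset.sum_nonpos fun z _ => ?_).trans zero_le_one
  have hdeg : (K.deg z : ℤ) ≤ H.deg z := by exact_mod_cast deg_le_deg hK z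
  have hmu : (K.mu x z : ℤ) ≤ H.deg x := by exact_mod_cast (hK x z).trans (mu_le_deg_s6 x z)
  linarith

theorem IsCfanBound.of_isSubgraph {x y : V} {l : ℕ} (hKK' : IsSubgraph K K')
    (h : IsCfanBound H K' x y l) : IsCfanBound H K x y l := by
  intro Z hZ hy
  refine le_trans (Finset.sum_le_sum fun z _ => ?_)
    (h Z (fun z hz => (hZ z hz).trans (hKK' x z)) hy)
  have hdeg : (K.deg z : ℤ) ≤ K'.deg z := by exact_mod_cast deg_le_deg hKK' z
  have hmu : (K.mu x z : ℤ) ≤ K'.mu x z := by exact_mod_cast hKK' x z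
  linarith

theorem cdeg_le_deg (hK : IsSubgraph K H) (x y : V) : cdeg H K x y ≤ H.deg x :=
  Nat.sInf_le (isCfanBound_deg hK x y)

theorem cdeg_mono (hKK' : IsSubgraph K K') (hK' : IsSubgraph K' H) (x y : V) :
    cdeg H K x y ≤ cdeg H K' x y := by
  rw [cdeg_eq_sInf, cdeg_eq_sInf]
  exact Nat.sInf_le <| IsCfanBound.of_isSubgraph hKK' <|
    Nat.sInf_mem (s := {l | IsCfanBound H K' x y l}) ⟨_, isCfanBound_deg hK' x y⟩

noncomputable def minCdeg (H K : Multigraph V) : ℕ :=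
  sInf {m | ∃ x y, 1 ≤ K.mu x y ∧ m = cdeg H K x y}

theorem minCdeg_le_cdeg {x y : V} (hxy : 1 ≤ K.mu x y) : minCdeg H K ≤ cdeg H K x y :=
  Nat.sInf_le ⟨x, y, hxy, rfl⟩

theorem minCdeg_le_maxDeg (hK : IsSubgraph K H) (hE : HasEdge K) : minCdeg H K ≤ H.maxDeg := by
  obtain ⟨x, y, hxy⟩ := hE
  exact (minCdeg_le_cdeg hxy).trans ((cdeg_le_deg hK x y).trans (deg_le_maxDeg_s6 x))

theorem minCdeg_mono (hKK' : IsSubgraph K K') (hK' : IsSubgraph K' H)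
    (hedges : ∀ x y, 1 ≤ K'.mu x y → 1 ≤ K.mu x y) (hE : HasEdge K) :
    minCdeg H K ≤ minCdeg H K' := by
  obtain ⟨u, v, huv⟩ := hE
  refine le_csInf ⟨_, u, v, huv.trans (hKK' u v), rfl⟩ ?_
  rintro _ ⟨x, y, hxy, rfl⟩
  exact (minCdeg_le_cdeg (hedges x y hxy)).trans (cdeg_mono hKK' hK' x y)

theorem minCdeg_le_minCdeg_saturation (hK : IsSubgraph K H) (hE : HasEdge K) :
    minCdeg H K ≤ minCdeg H (saturation K H) :=
  minCdeg_mono (isSubgraph_saturation hK) saturation_isSubgraph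
    (fun _ _ => one_le_mu_of_one_le_saturation_mu) hE

theorem HasEdge.saturation (hK : IsSubgraph K H) (hE : HasEdge K) : HasEdge (saturation K H) := by
  obtain ⟨u, v, huv⟩ := hE
  exact ⟨u, v, huv.trans (isSubgraph_saturation hK u v)⟩

end Multigraph

open Multigraph in
theorem stmt6_general {V : Type*} [Fintype V] (H : Multigraph V) :
    H.corefan = sSup { n | ∃ K : Multigraph V, IsSubgraph K H ∧ FullMult K H ∧ HasEdge K ∧
      n = sInf { m | ∃ x y, 1 ≤ K.mu x y ∧ m = cdeg H K x y } } := by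
  have hsub : { n | ∃ K : Multigraph V, IsSubgraph K H ∧ FullMult K H ∧ HasEdge K ∧
      n = minCdeg H K } ⊆ { n | ∃ K : Multigraph V, IsSubgraph K H ∧ HasEdge K ∧
      n = minCdeg H K } := fun _ ⟨K, hKH, _, hE, hn⟩ => ⟨K, hKH, hE, hn⟩
  have hbdd : BddAbove { n | ∃ K : Multigraph V, IsSubgraph K H ∧ HasEdge K ∧
      n = minCdeg H K } :=
    ⟨H.maxDeg, fun _ ⟨_, hKH, hE, hn⟩ => hn ▸ minCdeg_le_maxDeg hKH hE⟩
  refine le_antisymm (csSup_le' ?_) (csSup_le_csSup' hbdd hsub)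
  rintro _ ⟨K, hKH, hE, rfl⟩
  exact (minCdeg_le_minCdeg_saturation hKH hE).trans <| le_csSup (hbdd.mono hsub)
    ⟨_, saturation_isSubgraph, saturation_fullMult, hE.saturation hKH, rfl⟩

open Multigraph in
/-- Lemma: corefan(H) is attained over full-multiplicity subgraphs. -/
theorem stmt6 {V : Type*} [Fintype V] (H : Multigraph V) (hE : H.HasEdge) :
    H.corefan = sSup { n | ∃ K : Multigraph V, IsSubgraph K H ∧ FullMult K H ∧ HasEdge K ∧
      n = sInf { m | ∃ x y, 1 ≤ K.mu x y ∧ m = cdeg H K x y } } :=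
  stmt6_general H
end

section
/- Let B be a finite simple graph, and let s and t be integers with 0 ≤ s < t. Let B_s and B_t be the multigraphs with underlying simple graph B and constant multiplicity s+1 and t+1 respectively, i.e. μ_{B_s}(u,v) = s+1 and μ_{B_t}(u,v) = t+1 when u and v are adjacent in B, and 0 otherwise. If corefan(B_s) ≤ s, then corefan(B_t) ≤ t. -/
section Aux

open Multigraph

variable {V : Type*} [Fintype V]

lemma deg_le_of_subgraph {K H : Multigraph V} (h : IsSubgraph K H) (z : V) :
    K.deg z ≤ H.deg z :=
  Finset.sum_le_sum fun u _ => h z u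

lemma prop_of_bound {K H : Multigraph V} (h : IsSubgraph K H)
    {c : ℕ} (hc : ∀ u v, H.mu u v ≤ c) (x y : V) :
    c ∈ { l : ℕ | ∀ Z : Finset V, (∀ z ∈ Z, 1 ≤ K.mu x z) → y ∈ Z →
      ∑ z ∈ Z, ((K.deg z : ℤ) - (H.deg z : ℤ) + (K.mu x z : ℤ) - (l : ℤ)) ≤ 1 } := by
  intro Z hZ hy
  have h0 : ∑ z ∈ Z, ((K.deg z : ℤ) - (H.deg z : ℤ) + (K.mu x z : ℤ) - (c : ℤ)) ≤ 0 := by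
    apply Finset.sum_nonpos
    intro z hz
    have h1 : (K.deg z : ℤ) ≤ (H.deg z : ℤ) := by exact_mod_cast deg_le_of_subgraph h z
    have h2 : (K.mu x z : ℤ) ≤ (c : ℤ) := by exact_mod_cast (h x z).trans (hc x z)
    linarith
  linarith

lemma cdeg_le_of_bound {K H : Multigraph V} (h : IsSubgraph K H)
    {c : ℕ} (hc : ∀ u v, H.mu u v ≤ c) (x y : V) : cdeg H K x y ≤ c :=
  Nat.sInf_le (prop_of_bound h hc x y)

end Aux

/-- Lemma: for 0 ≤ s < t and B_s, B_t the constant-multiplicity-(s+1) resp. (t+1)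
multigraphs on a simple graph B, corefan(B_s) ≤ s implies corefan(B_t) ≤ t. -/
theorem stmt8 {V : Type*} [Fintype V] (B : SimpleGraph V) [DecidableRel B.Adj]
    (s t : ℕ) (hst : s < t)
    (Bs Bt : Multigraph V)
    (hBs : ∀ u v, Bs.mu u v = if B.Adj u v then s + 1 else 0)
    (hBt : ∀ u v, Bt.mu u v = if B.Adj u v then t + 1 else 0)
    (h : Bs.corefan ≤ s) :
    Bt.corefan ≤ t := by
  have hBsB : ∀ u v, Bs.mu u v ≤ s + 1 := fun u v => by rw [hBs]; split <;> omega
  have hBtB : ∀ u v, Bt.mu u v ≤ t + 1 := fun u v => by rw [hBt]; split <;> omega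
  apply csSup_le'
  rintro n ⟨K, hKsub, ⟨a, b, hab⟩, rfl⟩
  -- truncated subgraph
  set K' : Multigraph V := ⟨fun u v => min (K.mu u v) (s + 1),
    fun u v => by simp [K.symm u v], fun v => by simp [K.loopless v]⟩ with hK'def
  have hK'mu : ∀ u v, K'.mu u v = min (K.mu u v) (s + 1) := fun u v => rfl
  have hmuzero : ∀ u v, ¬ B.Adj u v → K.mu u v = 0 := by
    intro u v hadj
    have := hKsub u v
    rw [hBt u v, if_neg hadj] at this
    omega
  have hK'sub : Multigraph.IsSubgraph K' Bs := by
    intro u v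
    rw [hK'mu, hBs]
    by_cases hadj : B.Adj u v
    · rw [if_pos hadj]; omega
    · rw [if_neg hadj, hmuzero u v hadj]; omega
  have hK'edge : Multigraph.HasEdge K' := ⟨a, b, by rw [hK'mu]; omega⟩
  have hS'ne : {m | ∃ x y, 1 ≤ K'.mu x y ∧ m = Multigraph.cdeg Bs K' x y}.Nonempty :=
    ⟨Multigraph.cdeg Bs K' a b, Set.mem_setOf_eq ▸ ⟨a, b, by rw [hK'mu]; omega, rfl⟩⟩
  have hbdd : BddAbove { n | ∃ K : Multigraph V, Multigraph.IsSubgraph K Bs ∧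
      Multigraph.HasEdge K ∧
      n = sInf { m | ∃ x y, 1 ≤ K.mu x y ∧ m = Multigraph.cdeg Bs K x y } } := by
    refine ⟨s + 1, ?_⟩
    rintro m ⟨K'', h1, ⟨x, y, hxy⟩, rfl⟩
    have hm : Multigraph.cdeg Bs K'' x y ∈
        {m | ∃ x y, 1 ≤ K''.mu x y ∧ m = Multigraph.cdeg Bs K'' x y} :=
      Set.mem_setOf_eq ▸ ⟨x, y, hxy, rfl⟩
    exact (Nat.sInf_le hm).trans (cdeg_le_of_bound h1 hBsB x y)
  have hn'le : sInf {m | ∃ x y, 1 ≤ K'.mu x y ∧ m = Multigraph.cdeg Bs K' x y} ≤ s := by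
    have mem : sInf {m | ∃ x y, 1 ≤ K'.mu x y ∧ m = Multigraph.cdeg Bs K' x y} ∈
        { n | ∃ K : Multigraph V, Multigraph.IsSubgraph K Bs ∧ Multigraph.HasEdge K ∧
          n = sInf { m | ∃ x y, 1 ≤ K.mu x y ∧ m = Multigraph.cdeg Bs K x y } } :=
      Set.mem_setOf_eq ▸ ⟨K', hK'sub, hK'edge, rfl⟩
    exact (le_csSup hbdd mem).trans h
  obtain ⟨x, y, hxy, hcd⟩ := Nat.sInf_mem hS'ne
  have hcdle : Multigraph.cdeg Bs K' x y ≤ s := hcd ▸ hn'le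
  -- the defining property holds at l = cdeg Bs K' x y
  have hsetne : { l : ℕ | ∀ Z : Finset V, (∀ z ∈ Z, 1 ≤ K'.mu x z) → y ∈ Z →
      ∑ z ∈ Z, ((K'.deg z : ℤ) - (Bs.deg z : ℤ) + (K'.mu x z : ℤ) - (l : ℤ)) ≤ 1 }.Nonempty :=
    ⟨s + 1, prop_of_bound hK'sub hBsB x y⟩
  have hP := Nat.sInf_mem hsetne
  have hedgeK : 1 ≤ K.mu x y := by
    have := hxy; rw [hK'mu] at this; omega
  have hmem1 : Multigraph.cdeg Bt K x y ∈
      {m | ∃ x y, 1 ≤ K.mu x y ∧ m = Multigraph.cdeg Bt K x y} :=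
    Set.mem_setOf_eq ▸ ⟨x, y, hedgeK, rfl⟩
  refine (Nat.sInf_le hmem1).trans (Nat.sInf_le ?_)
  show (t : ℕ) ∈ { l : ℕ | ∀ Z : Finset V, (∀ z ∈ Z, 1 ≤ K.mu x z) → y ∈ Z →
    ∑ z ∈ Z, ((K.deg z : ℤ) - (Bt.deg z : ℤ) + (K.mu x z : ℤ) - (l : ℤ)) ≤ 1 }
  intro Z hZ hy
  have hZ' : ∀ z ∈ Z, 1 ≤ K'.mu x z := by
    intro z hz; rw [hK'mu]; have := hZ z hz; omega
  have hsum' := hP Z hZ' hy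
  -- sum at l = cdeg ≥ sum at l = s termwise... combine into one comparison
  calc ∑ z ∈ Z, ((K.deg z : ℤ) - (Bt.deg z : ℤ) + (K.mu x z : ℤ) - (t : ℤ))
      ≤ ∑ z ∈ Z, ((K'.deg z : ℤ) - (Bs.deg z : ℤ) + (K'.mu x z : ℤ)
          - ((Multigraph.cdeg Bs K' x y : ℕ) : ℤ)) := by
        apply Finset.sum_le_sum
        intro z hz
        -- degree comparison
        have hdeg : K.deg z + Bs.deg z ≤ K'.deg z + Bt.deg z := by
          unfold Multigraph.deg
          rw [← Finset.sum_add_distrib, ← Finset.sum_add_distrib]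
          apply Finset.sum_le_sum
          intro u _
          rw [hK'mu, hBs, hBt]
          by_cases hadj : B.Adj z u
          · rw [if_pos hadj, if_pos hadj]
            have := hKsub z u
            rw [hBt z u, if_pos hadj] at this
            omega
          · rw [if_neg hadj, if_neg hadj, hmuzero z u hadj]
            omega
        have hmu : K.mu x z ≤ K'.mu x z + (t - s) := by
          have h1 := hZ z hz
          have h2 := hKsub x z
          have hadj : B.Adj x z := by
            by_contra hadj
            rw [hmuzero x z hadj] at h1; omega
          rw [hBt x z, if_pos hadj] at h2
          rw [hK'mu]
          omega
        have hdegZ : (K.deg z : ℤ) + (Bs.deg z : ℤ) ≤ (K'.deg z : ℤ) + (Bt.deg z : ℤ) := by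
          exact_mod_cast hdeg
        have hmuZ : (K.mu x z : ℤ) ≤ (K'.mu x z : ℤ) + ((t : ℤ) - (s : ℤ)) := by
          have : (K.mu x z : ℤ) ≤ (K'.mu x z : ℤ) + ((t - s : ℕ) : ℤ) := by exact_mod_cast hmu
          have hts : ((t - s : ℕ) : ℤ) = (t : ℤ) - (s : ℤ) := by omega
          omega
        have hcdZ : ((Multigraph.cdeg Bs K' x y : ℕ) : ℤ) ≤ (s : ℤ) := by exact_mod_cast hcdle
        linarith
    _ ≤ 1 := hsum'
end

section
/- Let B be a finite simple graph that admits a full B-queue. Then corefan(B) = 0, where B is regarded as the multigraph with μ_B(u,v) = 1 if u and v are adjacent in B and 0 otherwise. -/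
/-- Theorem: if a simple graph B has a full B-queue then corefan(B) = 0. -/
theorem stmt9 {V : Type*} [Fintype V] (B : SimpleGraph V) [DecidableRel B.Adj]
    (hq : HasFullBQueue B)
    (H : Multigraph V)
    (hH : ∀ u v, H.mu u v = if B.Adj u v then 1 else 0) :
    H.corefan = 0 := by
  classical
  have hmu1 : ∀ u v, H.mu u v ≤ 1 := by
    intro u v; rw [hH]; split <;> omega
  have hmuAdj : ∀ u v, 1 ≤ H.mu u v → B.Adj u v := by
    intro u v h; rw [hH] at h; by_contra hA; simp [hA] at h
  -- Main claim: every nonempty subgraph has an edge of cfan degree 0.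
  have key : ∀ K : Multigraph V, Multigraph.IsSubgraph K H → Multigraph.HasEdge K →
      ∃ x y, 1 ≤ K.mu x y ∧ Multigraph.cdeg H K x y = 0 := by
    intro K hsub hedge
    have hdegle : ∀ z, K.deg z ≤ H.deg z := by
      intro z; exact Finset.sum_le_sum fun w _ => hsub z w
    have hdegpos : ∀ x z, 1 ≤ K.mu x z → 1 ≤ K.deg z := by
      intro x z h
      have : K.mu z x ≤ K.deg z := Finset.single_le_sum (f := fun w => K.mu z w)
        (fun w _ => Nat.zero_le _) (Finset.mem_univ x)
      rw [K.symm] at h; omega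
    set F : Set V := {z : V | 1 ≤ K.deg z ∧ K.deg z = H.deg z} with hF
    -- full vertices keep all their edges
    have hfull : ∀ z ∈ F, ∀ w, K.mu z w = H.mu z w := by
      intro z hz w
      have heq : ∑ w, K.mu z w = ∑ w, H.mu z w := hz.2
      have := (Finset.sum_eq_sum_iff_of_le (fun w _ => hsub z w)).mp heq
      exact this w (Finset.mem_univ w)
    -- the key bound, given that x has at most one full neighbor
    have bound : ∀ x y : V, 1 ≤ K.mu x y →
        (∀ z z', z ∈ F → z' ∈ F → B.Adj x z → B.Adj x z' → z = z') →
        Multigraph.cdeg H K x y = 0 := by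
      intro x y hxy hone
      have h0 : (0 : ℕ) ∈ { l : ℕ | ∀ Z : Finset V, (∀ z ∈ Z, 1 ≤ K.mu x z) → y ∈ Z →
          ∑ z ∈ Z, ((K.deg z : ℤ) - (H.deg z : ℤ) + (K.mu x z : ℤ) - (l : ℤ)) ≤ 1 } := by
        intro Z hZ _
        have hterm : ∀ z ∈ Z,
            (K.deg z : ℤ) - (H.deg z : ℤ) + (K.mu x z : ℤ) - ((0 : ℕ) : ℤ)
              ≤ (if z ∈ F then (1 : ℤ) else 0) := by
          intro z hz
          have h1 : 1 ≤ K.mu x z := hZ z hz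
          have h2 : K.mu x z ≤ 1 := le_trans (hsub x z) (hmu1 x z)
          have h3 : K.deg z ≤ H.deg z := hdegle z
          by_cases hzF : z ∈ F
          · have : K.deg z = H.deg z := hzF.2
            simp only [hzF, if_pos]
            push_cast
            omega
          · have h4 : 1 ≤ K.deg z := hdegpos x z h1
            have h5 : K.deg z ≠ H.deg z := by
              intro h; exact hzF ⟨h4, h⟩
            simp only [hzF, if_neg, not_false_iff]
            push_cast
            omega
        calc ∑ z ∈ Z, ((K.deg z : ℤ) - (H.deg z : ℤ) + (K.mu x z : ℤ) - ((0:ℕ) : ℤ))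
            ≤ ∑ z ∈ Z, (if z ∈ F then (1 : ℤ) else 0) := Finset.sum_le_sum hterm
          _ = ((Z.filter (· ∈ F)).card : ℤ) := by rw [Finset.sum_boole]
          _ ≤ 1 := by
              have : (Z.filter (· ∈ F)).card ≤ 1 := by
                apply Finset.card_le_one.mpr
                intro a ha b hb
                rw [Finset.mem_filter] at ha hb
                have hadjA : B.Adj x a := hmuAdj x a (le_trans (hZ a ha.1) (hsub x a))
                have hadjB : B.Adj x b := hmuAdj x b (le_trans (hZ b hb.1) (hsub x b))
                exact hone a b ha.2 hb.2 hadjA hadjB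
              exact_mod_cast this
      unfold Multigraph.cdeg
      exact Nat.sInf_eq_zero.mpr (Or.inl h0)
    by_cases hFne : F.Nonempty
    · -- use the queue to find a good vertex
      obtain ⟨q, u, S, -, hS0, hstep, -, hcard2, hSq⟩ := hq
      obtain ⟨f0, hf0⟩ := hFne
      set P : Set ℕ := {m | (S m ∩ F).Nonempty} with hP
      have hqP : q ∈ P := ⟨f0, by rw [hSq]; exact ⟨trivial, hf0⟩⟩
      set n : ℕ := sInf P with hn
      have hnP : n ∈ P := Nat.sInf_mem ⟨q, hqP⟩
      have hn0 : n ≠ 0 := by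
        intro h
        rw [h] at hnP
        obtain ⟨z, hz⟩ := hnP
        rw [hS0] at hz
        exact hz.1
      have hnq : n ≤ q := Nat.sInf_le hqP
      have hiq : n - 1 < q := by omega
      have hi1 : n - 1 + 1 = n := by omega
      have hSiF : ∀ z ∈ F, z ∉ S (n - 1) := by
        intro z hz hzS
        have : n - 1 ∉ P := Nat.notMem_of_lt_sInf (by omega)
        exact this ⟨z, hzS, hz⟩
      obtain ⟨f, hfS, hfF⟩ := hnP
      rw [← hi1] at hfS
      set x : V := u (n - 1) with hx
      -- every full neighbor of x lies in the small difference set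
      have hsub1 : ∀ z, z ∈ F → B.Adj x z → z ∈ S (n - 1 + 1) \ (S (n - 1) ∪ {x}) := by
        intro z hz hadj
        refine ⟨?_, ?_⟩
        · rw [hstep _ hiq]
          exact Or.inl (Or.inl hadj)
        · rintro (h | h)
          · exact hSiF z hz h
          · rw [Set.mem_singleton_iff] at h
            subst h
            exact B.irrefl hadj
      have hone : ∀ z z', z ∈ F → z' ∈ F → B.Adj x z → B.Adj x z' → z = z' := by
        intro z z' hz hz' ha ha'
        have hc := hcard2 _ hiq
        exact (Set.ncard_le_one (Set.toFinite _)).mp hc z (hsub1 z hz ha) z' (hsub1 z' hz' ha')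
      -- find an edge of K at x
      by_cases hfu : f = x
      · have hxF : x ∈ F := hfu ▸ hfF
        have h1 : 1 ≤ K.deg x := hxF.1
        have : ∃ y, 1 ≤ K.mu x y := by
          by_contra h
          push_neg at h
          have : K.deg x = 0 := Finset.sum_eq_zero fun w _ => by have := h w; omega
          omega
        obtain ⟨y, hy⟩ := this
        exact ⟨x, y, hy, bound x y hy hone⟩
      · have hfNS : f ∉ S (n - 1) := hSiF f hfF
        have : f ∈ B.neighborSet x := by
          have := hfS
          rw [hstep _ hiq] at this
          rcases this with ((h | h) | h)
          · exact h
          · exact absurd h hfu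
          · exact absurd h hfNS
        have hadj : B.Adj x f := this
        have hKxf : 1 ≤ K.mu x f := by
          have := hfull f hfF x
          rw [K.symm, this, H.symm, hH]
          simp [hadj]
        exact ⟨x, f, hKxf, bound x f hKxf hone⟩
    · -- no full vertices: any edge works
      obtain ⟨x, y, hxy⟩ := hedge
      refine ⟨x, y, hxy, bound x y hxy ?_⟩
      intro z z' hz _ _ _
      exact absurd ⟨z, hz⟩ hFne
  -- conclude
  apply Nat.le_zero.mp
  apply csSup_le'
  rintro n ⟨K, hsub, hedge, rfl⟩
  obtain ⟨x, y, hxy, hc⟩ := key K hsub hedge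
  have h0 : (0 : ℕ) ∈ {m | ∃ x y, 1 ≤ K.mu x y ∧ m = Multigraph.cdeg H K x y} :=
    ⟨x, y, hxy, hc.symm⟩
  exact le_of_eq (Nat.sInf_eq_zero.mpr (Or.inl h0))
end

section
/- Let n, k, and r be positive integers with r ≤ n and k < n. If k and r are both even, then there exists a k-regular simple graph G on n vertices together with a set S_r of r vertices such that the induced subgraph G[S_r] has a perfect matching. -/
/-!
Take the circulant graph on `ℤ/n` with jumps `±1, …, ±m`, where `k = 2m`: since `2m < n` the
`2m` jumps are distinct and nonzero, so every vertex has degree `k`. Consecutive vertices are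
adjacent, so on the first `r` vertices the pairs `{2i, 2i + 1}` form a perfect matching of the
induced subgraph.
-/

namespace SimpleGraph

theorem exists_isPerfectMatching_of_involutive {V : Type*} {G : SimpleGraph V}
    {f : V → V} (hf : Function.Involutive f) (hadj : ∀ v, G.Adj v (f v)) :
    ∃ M : G.Subgraph, M.IsPerfectMatching := by
  let M : G.Subgraph :=
    { verts := Set.univ
      Adj := fun v w => w = f v
      adj_sub := by rintro v _ rfl; exact hadj v
      edge_vert := fun _ => trivial
      symm := ⟨by rintro v _ rfl; exact (hf v).symm⟩ }
  exact ⟨M, M.isPerfectMatching_iff.mpr fun v => ⟨f v, rfl, fun _ h => h⟩⟩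

section Circulant

variable {G : Type*} [AddGroup G]

theorem circulantGraph_neighborSet (s : Set G) (v : G) :
    (circulantGraph s).neighborSet v = (· + v) '' ((s ∪ -s) \ {0}) := by
  ext w
  simp only [mem_neighborSet, circulantGraph_adj, Set.mem_image, Set.mem_sdiff, Set.mem_union,
    Set.mem_neg, Set.mem_singleton_iff]
  constructor
  · rintro ⟨hne, h⟩
    refine ⟨w - v, ⟨?_, sub_ne_zero.mpr (Ne.symm hne)⟩, sub_add_cancel w v⟩
    rwa [neg_sub, or_comm]
  · rintro ⟨d, ⟨hd, hd0⟩, rfl⟩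
    refine ⟨by simpa using hd0, ?_⟩
    simpa [sub_add_eq_sub_sub, or_comm] using hd

theorem circulantGraph_neighborSet_ncard_of_disjoint_neg {s : Set G} (hs : s.Finite)
    (h0 : 0 ∉ s) (hdisj : Disjoint s (-s)) (v : G) :
    ((circulantGraph s).neighborSet v).ncard = 2 * s.ncard := by
  have h0' : 0 ∉ s ∪ -s := by simpa using h0
  rw [circulantGraph_neighborSet, Set.ncard_image_of_injective _ (add_left_injective v),
    Set.sdiff_singleton_eq_self h0', Set.ncard_union_eq hdisj hs hs.neg, ← Set.image_neg_eq_neg,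
    Set.ncard_image_of_injective _ neg_injective, two_mul]

end Circulant

section FinJumps

variable {n m : ℕ}

theorem ncard_fin_val_preimage_Icc_one (h : m < n) :
    (Fin.val ⁻¹' Set.Icc 1 m : Set (Fin n)).ncard = m := by
  rw [Set.ncard_preimage_of_injective_subset_range Fin.val_injective, Set.ncard_Icc_nat,
    Nat.add_sub_cancel]
  exact fun a ha => ⟨⟨a, by grind⟩, rfl⟩

theorem disjoint_fin_val_preimage_Icc_one_neg (h : 2 * m < n) :
    Disjoint (Fin.val ⁻¹' Set.Icc 1 m : Set (Fin n)) (-(Fin.val ⁻¹' Set.Icc 1 m)) := by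
  refine Set.disjoint_left.mpr fun d hd hnd => ?_
  simp only [Set.mem_preimage, Set.mem_Icc, Set.mem_neg, Fin.val_neg'] at hd hnd
  rw [Nat.mod_eq_of_lt (by omega)] at hnd
  omega

theorem circulantGraph_Icc_adj_of_val_eq_add_one [NeZero n] (hm : 1 ≤ m) {a b : Fin n}
    (hab : b.val = a.val + 1) : (circulantGraph (Fin.val ⁻¹' Set.Icc 1 m)).Adj a b := by
  refine ⟨fun h => by simp [h] at hab, Or.inr ?_⟩
  simp only [Set.mem_preimage, Set.mem_Icc, Fin.sub_val_of_le (Fin.le_def.mpr (by omega) : a ≤ b)]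
  omega

theorem exists_isPerfectMatching_induce_fin_val_lt {r : ℕ} (G : SimpleGraph (Fin n))
    (hG : ∀ a b : Fin n, b.val = a.val + 1 → G.Adj a b) (hr : Even r) (hrn : r ≤ n) :
    ∃ M : (G.induce {v : Fin n | v.val < r}).Subgraph, M.IsPerfectMatching := by
  obtain ⟨s, rfl⟩ := hr
  -- `a ↦ a + 1 - 2 * (a % 2)` swaps `2 * i` and `2 * i + 1`
  let f (v : {v : Fin n | v.val < s + s}) : {v : Fin n | v.val < s + s} :=
    have hv : v.1.val < s + s := v.2
    ⟨⟨v.1 + 1 - 2 * (v.1 % 2), by omega⟩, show v.1.val + 1 - 2 * (v.1.val % 2) < s + s by omega⟩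
  refine exists_isPerfectMatching_of_involutive (f := f) (fun v => ?_) (fun v => ?_)
  · apply Subtype.ext; apply Fin.ext; simp only [f]; omega
  · simp only [comap_adj, Function.Embedding.subtype_apply, f]
    rcases Nat.mod_two_eq_zero_or_one v.1.val with h | h
    · exact hG _ _ (by simp only; omega)
    · exact (hG _ _ (by simp only; omega)).symm

end FinJumps

end SimpleGraph

open SimpleGraph in
theorem stmt10_general (n k r : ℕ) (hk : 0 < k)
    (hrn : r ≤ n) (hkn : k < n) (hke : Even k) (hre : Even r) :
    ∃ (G : SimpleGraph (Fin n)) (S : Finset (Fin n)),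
      (∀ v, (G.neighborSet v).ncard = k) ∧ S.card = r ∧
      ∃ M : (G.induce (S : Set (Fin n))).Subgraph, M.IsPerfectMatching := by
  obtain ⟨m, rfl⟩ := hke
  have : NeZero n := ⟨by omega⟩
  let J : Set (Fin n) := Fin.val ⁻¹' Set.Icc 1 m
  refine ⟨circulantGraph J, ({v : Fin n | v.val < r} : Finset (Fin n)), fun v => ?_, ?_, ?_⟩
  · rw [circulantGraph_neighborSet_ncard_of_disjoint_neg J.toFinite (by simp [J])
      (disjoint_fin_val_preimage_Icc_one_neg (by omega)), ncard_fin_val_preimage_Icc_one (by omega),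
      two_mul]
  · rw [Fin.card_filter_val_lt, min_eq_right hrn]
  · rw [Finset.coe_filter_univ]
    exact exists_isPerfectMatching_induce_fin_val_lt _
      (fun _ _ => circulantGraph_Icc_adj_of_val_eq_add_one (m := m) (by omega)) hre hrn

/-- Lemma: for positive n, k, r with r ≤ n, k < n, and k, r even, there is a k-regular
simple graph on n vertices with a set S_r of r vertices such that the induced subgraph
on S_r has a perfect matching. -/
theorem stmt10 (n k r : ℕ) (hn : 0 < n) (hk : 0 < k) (hr : 0 < r)
    (hrn : r ≤ n) (hkn : k < n) (hke : Even k) (hre : Even r) :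
    ∃ (G : SimpleGraph (Fin n)) (S : Finset (Fin n)),
      (∀ v, (G.neighborSet v).ncard = k) ∧ S.card = r ∧
      ∃ M : (G.induce (S : Set (Fin n))).Subgraph, M.IsPerfectMatching :=
  stmt10_general n k r hk hrn hkn hke hre
end

section
/- For each integer p ≥ 4, let H_p be the simple graph obtained from the complete graph K_p by designating a vertex v and attaching p−2 pendant vertices z_1, …, z_{p−2}, each adjacent only to v. Then corefan(H_p) = 0 (where H_p is regarded as the multigraph with μ(x,y) = 1 exactly when xy is an edge of H_p). -/
/-- For p ≥ 4, the graph H_p (K_p plus p−2 pendant vertices at a vertex v = inl 0)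
satisfies corefan(H_p) = 0. -/
theorem stmt14 (p : ℕ) (hp : 4 ≤ p)
    (B : SimpleGraph (Fin p ⊕ Fin (p - 2)))
    (hB : ∀ x y, B.Adj x y ↔
      ((∃ i j : Fin p, i ≠ j ∧ x = Sum.inl i ∧ y = Sum.inl j) ∨
       (∃ k, x = Sum.inl ⟨0, by omega⟩ ∧ y = Sum.inr k) ∨
       (∃ k, x = Sum.inr k ∧ y = Sum.inl ⟨0, by omega⟩)))
    (H : Multigraph (Fin p ⊕ Fin (p - 2)))
    (hH : ∀ x y, (H.mu x y = 1 ↔ B.Adj x y) ∧ H.mu x y ≤ 1) :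
    H.corefan = 0 := by
  classical
  have hmu1 : ∀ x y, H.mu x y ≤ 1 := fun x y => (hH x y).2
  have hadj : ∀ x y, 1 ≤ H.mu x y ↔ B.Adj x y := by
    intro x y
    constructor
    · intro h; exact (hH x y).1.mp (le_antisymm (hH x y).2 h)
    · intro h; exact ((hH x y).1.mpr h).ge
  set z0 : Fin p := ⟨0, by omega⟩ with hz0
  -- adjacency facts
  have adj_inr : ∀ (k : Fin (p-2)) z, B.Adj (Sum.inr k) z ↔ z = Sum.inl z0 := by
    intro k z
    rw [hB]
    constructor
    · rintro (⟨i, j, _, hx, _⟩ | ⟨k', hx, _⟩ | ⟨k', _, hyz⟩)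
      · exact absurd hx (by simp)
      · exact absurd hx (by simp)
      · exact hyz
    · rintro rfl; exact Or.inr (Or.inr ⟨k, rfl, rfl⟩)
  have adj_inl : ∀ (w : Fin p), w ≠ z0 → ∀ z, B.Adj (Sum.inl w) z →
      ∃ j : Fin p, j ≠ w ∧ z = Sum.inl j := by
    intro w hw z h
    rw [hB] at h
    rcases h with ⟨i, j, hij, hx, hyz⟩ | ⟨k', hx, _⟩ | ⟨k', hx, _⟩
    · obtain rfl := Sum.inl.inj hx
      exact ⟨j, fun h => hij h.symm, hyz⟩
    · exact absurd (Sum.inl.inj hx) hw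
    · exact absurd hx (by simp)
  have adj_wv0 : ∀ (w : Fin p), w ≠ z0 → B.Adj (Sum.inl w) (Sum.inl z0) := by
    intro w hw
    exact (hB _ _).mpr (Or.inl ⟨w, z0, hw, rfl, rfl⟩)
  have adj_v0inr : ∀ k : Fin (p-2), B.Adj (Sum.inl z0) (Sum.inr k) := by
    intro k
    exact (hB _ _).mpr (Or.inr (Or.inl ⟨k, rfl, rfl⟩))
  -- main lemma: every nonempty subgraph has an edge of cdeg 0
  have main : ∀ K : Multigraph (Fin p ⊕ Fin (p-2)), Multigraph.IsSubgraph K H →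
      Multigraph.HasEdge K → ∃ x y, 1 ≤ K.mu x y ∧ Multigraph.cdeg H K x y = 0 := by
    intro K hK hE
    have degKH : ∀ z, K.deg z ≤ H.deg z := fun z => Finset.sum_le_sum (fun u _ => hK z u)
    have cdeg0 : ∀ x y, (∀ Z : Finset (Fin p ⊕ Fin (p-2)), (∀ z ∈ Z, 1 ≤ K.mu x z) → y ∈ Z →
        ∑ z ∈ Z, ((K.deg z : ℤ) - (H.deg z : ℤ) + (K.mu x z : ℤ) - (((0:ℕ)) : ℤ)) ≤ 1) →
        Multigraph.cdeg H K x y = 0 := by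
      intro x y h
      exact Nat.sInf_eq_zero.mpr (Or.inl h)
    by_cases hA : ∃ k : Fin (p-2), 1 ≤ K.mu (Sum.inl z0) (Sum.inr k)
    · -- pendant edge case
      obtain ⟨k, hk⟩ := hA
      refine ⟨Sum.inr k, Sum.inl z0, by rwa [K.symm], cdeg0 _ _ ?_⟩
      intro Z hZ hy
      have hZsub : Z ⊆ {Sum.inl z0} := by
        intro z hz
        have h1 : 1 ≤ H.mu (Sum.inr k) z := le_trans (hZ z hz) (hK _ _)
        have h2 := (adj_inr k z).mp ((hadj _ _).mp h1)
        simp [h2]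
      have hZeq : Z = {Sum.inl z0} :=
        Finset.Subset.antisymm hZsub (Finset.singleton_subset_iff.mpr hy)
      rw [hZeq, Finset.sum_singleton]
      have h1 := degKH (Sum.inl z0)
      have h2 : K.mu (Sum.inr k) (Sum.inl z0) ≤ 1 := le_trans (hK _ _) (hmu1 _ _)
      push_cast
      omega
    · push_neg at hA
      have hKinr0 : ∀ k : Fin (p-2), K.mu (Sum.inl z0) (Sum.inr k) = 0 := by
        intro k; have := hA k; omega
      -- deficiency of v0 is at least p-2
      have hi : K.deg (Sum.inl z0) + (p - 2) ≤ H.deg (Sum.inl z0) := by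
        have e1 : K.deg (Sum.inl z0) = ∑ j : Fin p, K.mu (Sum.inl z0) (Sum.inl j) := by
          rw [Multigraph.deg, Fintype.sum_sum_type]
          simp [hKinr0]
        have e2 : H.deg (Sum.inl z0) = (∑ j : Fin p, H.mu (Sum.inl z0) (Sum.inl j))
            + ∑ k : Fin (p-2), H.mu (Sum.inl z0) (Sum.inr k) := by
          rw [Multigraph.deg, Fintype.sum_sum_type]
        have e3 : ∀ k : Fin (p-2), H.mu (Sum.inl z0) (Sum.inr k) = 1 :=
          fun k => (hH _ _).1.mpr (adj_v0inr k)
        have e4 : ∑ k : Fin (p-2), H.mu (Sum.inl z0) (Sum.inr k) = p - 2 := by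
          simp [e3]
        have e5 : ∑ j : Fin p, K.mu (Sum.inl z0) (Sum.inl j)
            ≤ ∑ j : Fin p, H.mu (Sum.inl z0) (Sum.inl j) :=
          Finset.sum_le_sum fun j _ => hK _ _
        omega
      have hinrK : ∀ k : Fin (p-2), K.deg (Sum.inr k) = 0 := by
        intro k
        rw [Multigraph.deg]
        apply Finset.sum_eq_zero
        intro u _
        by_cases hu : u = Sum.inl z0
        · subst hu; rw [K.symm]; exact hKinr0 k
        · have h1 := hK (Sum.inr k) u
          have h2 : H.mu (Sum.inr k) u = 0 := by
            by_contra h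
            have h3 : 1 ≤ H.mu (Sum.inr k) u := by omega
            exact hu ((adj_inr k u).mp ((hadj _ _).mp h3))
          omega
      have hinrH : ∀ k : Fin (p-2), 1 ≤ H.deg (Sum.inr k) := by
        intro k
        have h1 : 1 ≤ H.mu (Sum.inr k) (Sum.inl z0) := (hadj _ _).mpr ((adj_inr k _).mpr rfl)
        exact le_trans h1 (Finset.single_le_sum (f := fun u => H.mu (Sum.inr k) u)
          (fun _ _ => Nat.zero_le _) (Finset.mem_univ (Sum.inl z0)))
      by_cases hB1 : ∀ w : Fin p, w ≠ z0 → K.deg (Sum.inl w) < H.deg (Sum.inl w)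
      · -- no full vertex: any edge works
        obtain ⟨a, b, hab⟩ := hE
        refine ⟨a, b, hab, cdeg0 _ _ ?_⟩
        intro Z hZ hy
        have hterm : ∀ z ∈ Z, ((K.deg z : ℤ) - (H.deg z : ℤ) + (K.mu a z : ℤ) - (((0:ℕ)):ℤ)) ≤ 0 := by
          intro z hz
          have hlt : K.deg z < H.deg z := by
            rcases z with w | k
            · by_cases hw : w = z0
              · subst hw; omega
              · exact hB1 w hw
            · have h1 := hinrK k; have h2 := hinrH k; omega
          have hm : K.mu a z ≤ 1 := le_trans (hK _ _) (hmu1 _ _)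
          push_cast
          omega
        exact le_trans (Finset.sum_nonpos hterm) (by norm_num)
      · push_neg at hB1
        obtain ⟨w, hw, hfull⟩ := hB1
        -- w is full, hence adjacent in K to v0
        have hedge : 1 ≤ K.mu (Sum.inl w) (Sum.inl z0) := by
          by_contra h
          have h0 : K.mu (Sum.inl w) (Sum.inl z0) = 0 := by omega
          have hlt : K.deg (Sum.inl w) < H.deg (Sum.inl w) := by
            apply Finset.sum_lt_sum (fun u _ => hK _ _)
            refine ⟨Sum.inl z0, Finset.mem_univ _, ?_⟩
            rw [h0]
            have h1 := (hH _ _).1.mpr (adj_wv0 w hw)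
            omega
          omega
        refine ⟨Sum.inl w, Sum.inl z0, hedge, cdeg0 _ _ ?_⟩
        intro Z hZ hy
        have hZmem : ∀ z ∈ Z, ∃ j : Fin p, j ≠ w ∧ z = Sum.inl j := by
          intro z hz
          have h1 : 1 ≤ H.mu (Sum.inl w) z := le_trans (hZ z hz) (hK _ _)
          exact adj_inl w hw z ((hadj _ _).mp h1)
        have hcard : (Z.erase (Sum.inl z0)).card ≤ p - 2 := by
          have hsub : Z.erase (Sum.inl z0) ⊆
              Finset.image Sum.inl ((Finset.univ.erase w).erase z0) := by
            intro z hz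
            obtain ⟨hz1, hz2⟩ := Finset.mem_erase.mp hz
            obtain ⟨j, hj, rfl⟩ := hZmem z hz2
            apply Finset.mem_image_of_mem
            refine Finset.mem_erase.mpr ⟨?_, Finset.mem_erase.mpr ⟨hj, Finset.mem_univ _⟩⟩
            intro h; exact hz1 (by rw [h])
          refine le_trans (Finset.card_le_card hsub) ?_
          rw [Finset.card_image_of_injective _ Sum.inl_injective,
            Finset.card_erase_of_mem (Finset.mem_erase.mpr ⟨Ne.symm hw, Finset.mem_univ _⟩),
            Finset.card_erase_of_mem (Finset.mem_univ _), Finset.card_univ, Fintype.card_fin]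
          omega
        rw [← Finset.add_sum_erase Z _ hy]
        have t1 : ((K.deg (Sum.inl z0) : ℤ) - (H.deg (Sum.inl z0) : ℤ)
            + (K.mu (Sum.inl w) (Sum.inl z0) : ℤ) - (((0:ℕ)):ℤ)) ≤ 3 - p := by
          have h2 : K.mu (Sum.inl w) (Sum.inl z0) ≤ 1 := le_trans (hK _ _) (hmu1 _ _)
          push_cast
          omega
        have t2 : ∑ z ∈ Z.erase (Sum.inl z0),
            ((K.deg z : ℤ) - (H.deg z : ℤ) + (K.mu (Sum.inl w) z : ℤ) - (((0:ℕ)):ℤ))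
            ≤ ((Z.erase (Sum.inl z0)).card : ℤ) := by
          have hb : ∀ z ∈ Z.erase (Sum.inl z0), ((K.deg z : ℤ) - (H.deg z : ℤ)
              + (K.mu (Sum.inl w) z : ℤ) - (((0:ℕ)):ℤ)) ≤ 1 := by
            intro z hz
            have h1 := degKH z
            have h2 : K.mu (Sum.inl w) z ≤ 1 := le_trans (hK _ _) (hmu1 _ _)
            push_cast
            omega
          calc ∑ z ∈ Z.erase (Sum.inl z0), ((K.deg z : ℤ) - (H.deg z : ℤ)
                + (K.mu (Sum.inl w) z : ℤ) - (((0:ℕ)):ℤ))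
              ≤ ∑ _z ∈ Z.erase (Sum.inl z0), (1:ℤ) := Finset.sum_le_sum hb
            _ = ((Z.erase (Sum.inl z0)).card : ℤ) := by simp
        have hc : ((Z.erase (Sum.inl z0)).card : ℤ) ≤ (p:ℤ) - 2 := by
          have := hcard; omega
        linarith
  -- conclude
  rw [Multigraph.corefan]
  have hsub : { n | ∃ K : Multigraph (Fin p ⊕ Fin (p-2)), Multigraph.IsSubgraph K H ∧
      Multigraph.HasEdge K ∧ n = sInf { m | ∃ x y, 1 ≤ K.mu x y ∧ m = Multigraph.cdeg H K x y } }
      ⊆ {0} := by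
    rintro n ⟨K, hK, hE, rfl⟩
    obtain ⟨x, y, hxy, hc⟩ := main K hK hE
    exact Nat.sInf_eq_zero.mpr (Or.inl ⟨x, y, hxy, hc.symm⟩)
  rcases Set.subset_singleton_iff_eq.mp hsub with h | h
  · rw [h]; exact csSup_empty
  · rw [h, csSup_singleton]
end
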